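/- arXiv:2203.06008 — 8 statements merged into one kernel-verified Lean document; each statement's English description precedes it below -/
import Mathlib

section
/- Let α be a non-degenerate simplex in ℝ^N with circumcenter Z(α) and circumradius R(α), and define the power distance Pow_α(x) = ‖x - Z(α)‖² - R(α)². Then for every point z ∈ ℝ^N and every point x in the affine hull of α with (normalized) barycentric coordinates (λ_a)_{a ∈ α}, we have Pow_α(x) = ‖x - z‖² - Σ_{a ∈ α} λ_a ‖a - z‖². -/
open scoped BigOperators
open scoped RealInnerProductSpace

/-- **Power distance of an affine combination.**
If `α` is a (non-degenerate) simplex in `ℝ^N` with circumcenter `Z` and circumradius `R`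
(so that `‖a - Z‖ = R` for every vertex `a ∈ α`), and if `x` lies in the affine hull of `α`
with normalized barycentric coordinates `lam a` (summing to `1`), then for any `z ∈ ℝ^N`:
`‖x - Z‖² - R² = ‖x - z‖² - ∑_{a ∈ α} lam a * ‖a - z‖²`. -/
theorem power_expression_with_additional_point
    {N : ℕ} (α : Finset (EuclideanSpace ℝ (Fin N)))
    (hindep : AffineIndependent ℝ (fun p : (α : Set (EuclideanSpace ℝ (Fin N))) => (p : EuclideanSpace ℝ (Fin N))))
    (Z : EuclideanSpace ℝ (Fin N)) (R : ℝ)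
    (hcirc : ∀ a ∈ α, ‖a - Z‖ = R)
    (lam : EuclideanSpace ℝ (Fin N) → ℝ)
    (hsum : ∑ a ∈ α, lam a = 1)
    (x : EuclideanSpace ℝ (Fin N))
    (hx : x = ∑ a ∈ α, lam a • a)
    (z : EuclideanSpace ℝ (Fin N)) :
    ‖x - Z‖ ^ 2 - R ^ 2 = ‖x - z‖ ^ 2 - ∑ a ∈ α, lam a * ‖a - z‖ ^ 2 := by
  have key : ∀ a ∈ α, ‖a - z‖ ^ 2
      = R ^ 2 + 2 * ⟪a, Z⟫ - ‖Z‖ ^ 2 - 2 * ⟪a, z⟫ + ‖z‖ ^ 2 := by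
    intro a ha
    have h1 : ‖a - Z‖ ^ 2 = R ^ 2 := by rw [hcirc a ha]
    have h2 : ‖a - Z‖ ^ 2 = ‖a‖ ^ 2 - 2 * ⟪a, Z⟫ + ‖Z‖ ^ 2 := norm_sub_sq_real a Z
    have h3 : ‖a - z‖ ^ 2 = ‖a‖ ^ 2 - 2 * ⟪a, z⟫ + ‖z‖ ^ 2 := norm_sub_sq_real a z
    linarith
  have hxinner : ∀ y : EuclideanSpace ℝ (Fin N), ⟪x, y⟫ = ∑ a ∈ α, lam a * ⟪a, y⟫ := by
    intro y
    rw [hx, sum_inner]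
    exact Finset.sum_congr rfl fun a _ => real_inner_smul_left a y (lam a)
  have hsum2 : ∑ a ∈ α, lam a * ‖a - z‖ ^ 2
      = R ^ 2 + 2 * ⟪x, Z⟫ - ‖Z‖ ^ 2 - 2 * ⟪x, z⟫ + ‖z‖ ^ 2 := by
    rw [Finset.sum_congr rfl fun a ha => by rw [key a ha]]
    simp only [mul_add, mul_sub, Finset.sum_add_distrib, Finset.sum_sub_distrib,
      hsum, hxinner]
    have eZ : ∑ a ∈ α, lam a * (2 * ⟪a, Z⟫) = 2 * ∑ a ∈ α, lam a * ⟪a, Z⟫ := by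
      rw [Finset.mul_sum]; exact Finset.sum_congr rfl fun a _ => by ring
    have ez : ∑ a ∈ α, lam a * (2 * ⟪a, z⟫) = 2 * ∑ a ∈ α, lam a * ⟪a, z⟫ := by
      rw [Finset.mul_sum]; exact Finset.sum_congr rfl fun a _ => by ring
    have eR : ∑ a ∈ α, lam a * R ^ 2 = R ^ 2 := by rw [← Finset.sum_mul, hsum, one_mul]
    have eW : ∑ a ∈ α, lam a * ‖Z‖ ^ 2 = ‖Z‖ ^ 2 := by rw [← Finset.sum_mul, hsum, one_mul]
    have ew : ∑ a ∈ α, lam a * ‖z‖ ^ 2 = ‖z‖ ^ 2 := by rw [← Finset.sum_mul, hsum, one_mul]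
    linarith [eZ, ez, eR, eW, ew]
  have h4 : ‖x - Z‖ ^ 2 = ‖x‖ ^ 2 - 2 * ⟪x, Z⟫ + ‖Z‖ ^ 2 := norm_sub_sq_real x Z
  have h5 : ‖x - z‖ ^ 2 = ‖x‖ ^ 2 - 2 * ⟪x, z⟫ + ‖z‖ ^ 2 := norm_sub_sq_real x z
  rw [hsum2]; linarith
end

section
/- Let A ⊆ ℝ^N be a closed set with reach R = Reach(A) > 0. Let 0 < 16δ ≤ ρ ≤ R/3 and suppose σ ⊆ ℝ^N is a subset contained in the δ-tubular neighborhood of A and enclosed in a ball of radius ρ. Then the convex hull of σ is contained in the (ρ/4)-tubular neighborhood of A. -/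
open Metric Set

/-- A point `x` has a unique nearest point in `A`. -/
def HasUniqueNearest {N : ℕ} (A : Set (EuclideanSpace ℝ (Fin N)))
    (x : EuclideanSpace ℝ (Fin N)) : Prop :=
  ∃! a, a ∈ A ∧ dist x a = Metric.infDist x A

/-- The reach of a set `A ⊆ ℝ^N`: the supremum of radii `r` such that every point
at distance less than `r` from `A` has a unique nearest point in `A`. -/
noncomputable def reach {N : ℕ} (A : Set (EuclideanSpace ℝ (Fin N))) : ENNReal :=
  ⨆ (r : NNReal) (_ : ∀ x, Metric.infDist x A < r → HasUniqueNearest A x), (r : ENNReal)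

open RealInnerProductSpace Filter Topology

namespace ReachAux

variable {N : ℕ}

/-- Local growth of the distance function along the outward normal ray, at a point
with a unique nearest point. -/
lemma growth (A : Set (EuclideanSpace ℝ (Fin N))) (hA : IsClosed A)
    {y b : EuclideanSpace ℝ (Fin N)} (hbA : b ∈ A)
    (hbd : dist y b = infDist y A) (hpos : 0 < infDist y A)
    (huniq : ∀ q ∈ A, dist y q = infDist y A → q = b)
    {ε : ℝ} (hε : 0 < ε) (hε1 : ε < 1) :
    ∃ τ₀ > 0, ∀ τ : ℝ, 0 < τ → τ ≤ τ₀ →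
      infDist y A + (1 - ε) * τ ≤
        infDist (y + τ • ((infDist y A)⁻¹ • (y - b))) A := by
  set h : ℝ := infDist y A with hhdef
  set w : EuclideanSpace ℝ (Fin N) := h⁻¹ • (y - b) with hwdef
  have hyb : ‖y - b‖ = h := by rw [← dist_eq_norm]; exact hbd
  have hw1 : ‖w‖ = 1 := by
    rw [hwdef, norm_smul, hyb, norm_inv, Real.norm_of_nonneg hpos.le]
    field_simp
  by_contra hcon
  push_neg at hcon
  -- extract a bad sequence
  have hbad : ∀ n : ℕ, ∃ τ : ℝ, 0 < τ ∧ τ ≤ 1 / (n + 1) ∧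
      infDist (y + τ • w) A < h + (1 - ε) * τ := by
    intro n
    obtain ⟨τ, hτ1, hτ2, hτ3⟩ := hcon (1 / (n + 1)) (by positivity)
    exact ⟨τ, hτ1, hτ2, hτ3⟩
  choose τ hτpos hτle hτbad using hbad
  -- nearest points of the perturbed points
  have hAne : A.Nonempty := ⟨b, hbA⟩
  have hq : ∀ n : ℕ, ∃ q ∈ A, infDist (y + τ n • w) A = dist (y + τ n • w) q :=
    fun n => hA.exists_infDist_eq_dist hAne _
  choose q hqA hqd using hq
  have hτ1 : ∀ n, τ n ≤ 1 := by
    intro n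
    refine (hτle n).trans ?_
    rw [div_le_one (by positivity)]
    linarith [Nat.cast_nonneg (α := ℝ) n]
  have hdistyq : ∀ n, dist y (q n) ≤ h + 2 * τ n := by
    intro n
    have h1 : dist y (q n) ≤ dist y (y + τ n • w) + dist (y + τ n • w) (q n) :=
      dist_triangle _ _ _
    have h2 : dist y (y + τ n • w) = τ n := by
      rw [dist_eq_norm]
      simp only [sub_add_cancel_left, norm_neg]
      rw [norm_smul, hw1, Real.norm_of_nonneg (hτpos n).le, mul_one]
    have h3 : dist (y + τ n • w) (q n) < h + (1 - ε) * τ n := by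
      rw [← hqd n]; exact hτbad n
    nlinarith [hτpos n, mul_pos hε (hτpos n)]
  have hmem : ∀ n, q n ∈ A ∩ closedBall y (h + 2) := by
    intro n
    refine ⟨hqA n, ?_⟩
    rw [mem_closedBall, dist_comm]
    have := hdistyq n
    nlinarith [hτ1 n, hτpos n]
  have hKcpt : IsCompact (A ∩ closedBall y (h + 2)) :=
    (isCompact_closedBall y (h + 2)).inter_left hA
  obtain ⟨qbar, hqbarK, φ, hφmono, hφtend⟩ := hKcpt.tendsto_subseq hmem
  -- τ (φ n) → 0
  have hτφ0 : Tendsto (fun n => τ (φ n)) atTop (𝓝 0) := by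
    apply squeeze_zero (fun n => (hτpos (φ n)).le)
      (fun n => (hτle (φ n)).trans ?_) tendsto_one_div_add_atTop_nhds_zero_nat
    have hn : (n : ℝ) + 1 ≤ (φ n : ℝ) + 1 := by
      have hnn : n ≤ φ n := hφmono.le_apply
      have : (n : ℝ) ≤ (φ n : ℝ) := by exact_mod_cast hnn
      linarith
    exact one_div_le_one_div_of_le (by positivity) hn
  -- dist y qbar = h
  have hdtend : Tendsto (fun n => dist y (q (φ n))) atTop (𝓝 (dist y qbar)) :=
    tendsto_const_nhds.dist hφtend
  have hub : Tendsto (fun n => h + 2 * τ (φ n)) atTop (𝓝 h) := by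
    have h0 : Tendsto (fun _ : ℕ => h) atTop (𝓝 h) := tendsto_const_nhds
    have := h0.add (hτφ0.const_mul 2)
    simpa using this
  have hdyqbar_le : dist y qbar ≤ h :=
    le_of_tendsto_of_tendsto' hdtend hub (fun n => hdistyq (φ n))
  have hdyqbar : dist y qbar = h :=
    le_antisymm hdyqbar_le (infDist_le_dist_of_mem hqbarK.1)
  have hqbarb : qbar = b := huniq qbar hqbarK.1 hdyqbar
  -- key inner product inequality
  have key : ∀ n, ⟪y - q n, w⟫ < (1 - ε) * h := by
    intro n
    have hlt : ‖(y - q n) + τ n • w‖ < h + (1 - ε) * τ n := by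
      have h3 : dist (y + τ n • w) (q n) < h + (1 - ε) * τ n := by
        rw [← hqd n]; exact hτbad n
      rw [dist_eq_norm] at h3
      have : y + τ n • w - q n = (y - q n) + τ n • w := by abel
      rwa [this] at h3
    have hrpos : (0:ℝ) < h + (1 - ε) * τ n := by nlinarith [hτpos n]
    have hsq : ‖(y - q n) + τ n • w‖ ^ 2 < (h + (1 - ε) * τ n) ^ 2 :=
      pow_lt_pow_left₀ hlt (norm_nonneg _) two_ne_zero
    rw [norm_add_sq_real] at hsq
    rw [real_inner_smul_right] at hsq
    have hns : ‖τ n • w‖ ^ 2 = (τ n) ^ 2 := by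
      rw [norm_smul, hw1, Real.norm_of_nonneg (hτpos n).le, mul_one]
    rw [hns] at hsq
    have hlow : h ≤ ‖y - q n‖ := by
      rw [← dist_eq_norm]; exact infDist_le_dist_of_mem (hqA n)
    have hlow2 : h ^ 2 ≤ ‖y - q n‖ ^ 2 := pow_le_pow_left₀ hpos.le hlow 2
    have hτn := hτpos n
    nlinarith [mul_pos hτn hτn, mul_pos hε hτn, mul_pos (mul_pos hε hτn) hτn]
  -- pass to the limit
  have hIlim : Tendsto (fun n => ⟪y - q (φ n), w⟫) atTop (𝓝 ⟪y - qbar, w⟫) :=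
    (tendsto_const_nhds.sub hφtend).inner tendsto_const_nhds
  have hle : ⟪y - qbar, w⟫ ≤ (1 - ε) * h :=
    le_of_tendsto hIlim (Eventually.of_forall fun n => (key (φ n)).le)
  rw [hqbarb] at hle
  have hyw : ⟪y - b, w⟫ = h := by
    rw [hwdef, real_inner_smul_right, real_inner_self_eq_norm_sq, hyb]
    field_simp
  rw [hyw] at hle
  nlinarith [mul_pos hε hpos]

/-- From a point at positive distance `d` from `A`, one can find a point `y` at distance
exactly `T` from `A` with a controlled chain bound `(1-ε) dist x y ≤ T - d`. -/
lemma exists_far_point (A : Set (EuclideanSpace ℝ (Fin N))) (hA : IsClosed A)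
    (hAne : A.Nonempty) (R : ℝ)
    (huniq : ∀ z : EuclideanSpace ℝ (Fin N), infDist z A < R → HasUniqueNearest A z)
    (x : EuclideanSpace ℝ (Fin N)) {T ε : ℝ}
    (hd0 : 0 < infDist x A) (hdT : infDist x A ≤ T) (hTR : T < R)
    (hε : 0 < ε) (hε1 : ε < 1) :
    ∃ y : EuclideanSpace ℝ (Fin N),
      infDist y A = T ∧ (1 - ε) * dist x y ≤ T - infDist x A := by
  set d : ℝ := infDist x A with hddef
  set W : Set (EuclideanSpace ℝ (Fin N)) :=
    {y | infDist y A ≤ T ∧ (1 - ε) * dist x y ≤ infDist y A - d} with hWdef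
  have hWclosed : IsClosed W := by
    apply IsClosed.inter
    · exact isClosed_le (continuous_infDist_pt A) continuous_const
    · exact isClosed_le (continuous_const.mul (continuous_const.dist continuous_id))
        ((continuous_infDist_pt A).sub continuous_const)
  have hWsub : W ⊆ closedBall x ((T - d) / (1 - ε)) := by
    intro y hy
    rw [mem_closedBall, dist_comm]
    rw [le_div_iff₀ (by linarith)]
    have h1 := hy.1
    have h2 := hy.2
    nlinarith
  have hWcpt : IsCompact W :=
    (isCompact_closedBall x ((T - d) / (1 - ε))).of_isClosed_subset hWclosed hWsub
  have hxW : x ∈ W := by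
    constructor
    · exact hdT
    · simp [dist_self]; exact hddef.le
  obtain ⟨ys, hysW, hysmax⟩ :=
    hWcpt.exists_isMaxOn ⟨x, hxW⟩ (continuous_infDist_pt A).continuousOn
  set v : ℝ := infDist ys A with hvdef
  have hvd : d ≤ v := by
    have h2 := hysW.2
    nlinarith [dist_nonneg (x := x) (y := ys)]
  have hvT : v ≤ T := hysW.1
  rcases eq_or_lt_of_le hvT with heq | hlt
  · refine ⟨ys, heq, ?_⟩
    have := hysW.2
    linarith
  · exfalso
    have hvR : v < R := hlt.trans hTR
    obtain ⟨bp, hbp, hbu⟩ := huniq ys hvR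
    have hv0 : 0 < v := hd0.trans_le hvd
    obtain ⟨τ₀, hτ₀, hgrow⟩ := growth A hA hbp.1 hbp.2 hv0
      (fun q hq hqd => hbu q ⟨hq, hqd⟩) hε hε1
    set τ : ℝ := min τ₀ (T - v) with hτdef
    have hτpos : 0 < τ := lt_min hτ₀ (by linarith)
    set w : EuclideanSpace ℝ (Fin N) := v⁻¹ • (ys - bp) with hwdef
    set y' : EuclideanSpace ℝ (Fin N) := ys + τ • w with hy'def
    have hg : v + (1 - ε) * τ ≤ infDist y' A := hgrow τ hτpos (min_le_left _ _)
    have hyb : ‖ys - bp‖ = v := by rw [← dist_eq_norm]; exact hbp.2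
    have hw1 : ‖w‖ = 1 := by
      rw [hwdef, norm_smul, hyb, norm_inv, Real.norm_of_nonneg hv0.le]
      field_simp
    have hdyy : dist y' ys = τ := by
      rw [hy'def, dist_eq_norm]
      simp only [add_sub_cancel_left]
      rw [norm_smul, hw1, Real.norm_of_nonneg hτpos.le, mul_one]
    have hup : infDist y' A ≤ v + τ := by
      have := infDist_le_infDist_add_dist (x := y') (y := ys) (s := A)
      rw [hdyy] at this
      linarith
    have hy'W : y' ∈ W := by
      constructor
      · have : τ ≤ T - v := min_le_right _ _
        linarith
      · have htri : dist x y' ≤ dist x ys + τ := by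
          have h1 := dist_triangle x ys y'
          rw [dist_comm ys y', hdyy] at h1
          linarith
        have h2 := hysW.2
        nlinarith
    have hle : infDist y' A ≤ v := hysmax hy'W
    nlinarith [mul_pos hε hτpos]

end ReachAux

/-- **Small samples near a set of positive reach have convex hulls nearby.**
Let `A ⊆ ℝ^N` be closed with reach `R > 0`, let `0 < 16δ ≤ ρ ≤ R/3`, and let
`σ` be contained in the `δ`-tubular neighborhood of `A` and in a ball of radius
`ρ`. Then `Conv σ` is contained in the `(ρ/4)`-tubular neighborhood of `A`. -/
theorem convexHull_subset_tubularNeighborhood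
    {N : ℕ} (A : Set (EuclideanSpace ℝ (Fin N))) (hA : IsClosed A)
    (R δ ρ : ℝ) (hR : ENNReal.ofReal R = reach A) (hRpos : 0 < R)
    (hδ : 0 < δ) (hδρ : 16 * δ ≤ ρ) (hρR : ρ ≤ R / 3)
    (σ : Set (EuclideanSpace ℝ (Fin N)))
    (hσA : σ ⊆ {x | Metric.infDist x A ≤ δ})
    (c : EuclideanSpace ℝ (Fin N)) (hsmall : σ ⊆ Metric.closedBall c ρ) :
    convexHull ℝ σ ⊆ {x | Metric.infDist x A ≤ ρ / 4} := by
  intro x hx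
  simp only [mem_setOf_eq]
  have hρ : 0 < ρ := by linarith
  rcases A.eq_empty_or_nonempty with rfl | hAne
  · rw [infDist_empty]; positivity
  by_contra hcon
  push_neg at hcon
  set d : ℝ := infDist x A with hddef
  -- σ is nonempty
  have hσne : σ.Nonempty := by
    rcases σ.eq_empty_or_nonempty with rfl | hne
    · rw [convexHull_empty] at hx; exact absurd hx (notMem_empty x)
    · exact hne
  obtain ⟨p, hp⟩ := hσne
  -- uniqueness of nearest points in the open R-tube
  have huniq : ∀ z : EuclideanSpace ℝ (Fin N), infDist z A < R → HasUniqueNearest A z := by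
    intro z hz
    have h1 : ENNReal.ofReal (infDist z A) < reach A := by
      rw [← hR]
      exact (ENNReal.ofReal_lt_ofReal_iff hRpos).mpr hz
    rw [reach, lt_iSup_iff] at h1
    obtain ⟨r, hr⟩ := h1
    rw [lt_iSup_iff] at hr
    obtain ⟨hprop, hlt⟩ := hr
    apply hprop
    have h2 : ENNReal.ofReal (infDist z A) < ENNReal.ofReal (r : ℝ) := by
      rwa [ENNReal.ofReal_coe_nnreal]
    rcases le_or_gt ((r : ℝ)) 0 with h3 | h3
    · exfalso
      have : ENNReal.ofReal (r : ℝ) = 0 := ENNReal.ofReal_eq_zero.mpr h3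
      rw [this] at h2
      exact absurd h2 (by simp)
    · exact (ENNReal.ofReal_lt_ofReal_iff h3).mp h2
  -- basic distance facts
  have hconvball : convexHull ℝ σ ⊆ closedBall c ρ :=
    convexHull_min hsmall (convex_closedBall c ρ)
  have hxc : dist x c ≤ ρ := hconvball hx
  have hpc : dist p c ≤ ρ := hsmall hp
  have hpA : infDist p A ≤ δ := hσA hp
  have hd2 : d ≤ 2 * ρ + δ := by
    have h1 : d ≤ infDist p A + dist x p := infDist_le_infDist_add_dist
    have h2 : dist x p ≤ dist x c + dist c p := dist_triangle _ _ _
    have h3 : dist c p = dist p c := dist_comm _ _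
    linarith
  set T : ℝ := (95 / 32) * ρ with hTdef
  have hd0 : 0 < d := lt_trans (by positivity) hcon
  have hdT : d ≤ T := by linarith
  have hTR : T < R := by linarith
  obtain ⟨y, hyT, hychain⟩ := ReachAux.exists_far_point A hA hAne R huniq x
    (T := T) (ε := 1 / 1000) hd0 hdT hTR (by norm_num) (by norm_num)
  -- every point of σ is far from y
  have hσfar : ∀ p' ∈ σ, T - δ ≤ dist p' y := by
    intro p' hp'
    obtain ⟨a, haA, had⟩ := hA.exists_infDist_eq_dist hAne p'
    have h1 : dist p' a ≤ δ := by rw [← had]; exact hσA hp'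
    have h2 : T ≤ dist y a := by rw [← hyT]; exact infDist_le_dist_of_mem haA
    have h3 : dist y a ≤ dist y p' + dist p' a := dist_triangle _ _ _
    have h4 : dist y p' = dist p' y := dist_comm _ _
    linarith
  -- half-space argument
  set K : ℝ := ((T - δ) ^ 2 - ρ ^ 2 + ‖c‖ ^ 2 - ‖y‖ ^ 2) / 2 with hKdef
  have hid : ∀ z : EuclideanSpace ℝ (Fin N),
      ‖z - y‖ ^ 2 - ‖z - c‖ ^ 2 = 2 * ⟪z, c - y⟫ + ‖y‖ ^ 2 - ‖c‖ ^ 2 := by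
    intro z
    rw [norm_sub_sq_real, norm_sub_sq_real, inner_sub_right]
    ring
  have hTδ : 0 ≤ T - δ := by linarith
  have hlin : IsLinearMap ℝ (fun z : EuclideanSpace ℝ (Fin N) => ⟪z, c - y⟫) :=
    ⟨fun u v => inner_add_left u v (c - y), fun r u => real_inner_smul_left u (c - y) r⟩
  have hhalf : convexHull ℝ σ ⊆ {z : EuclideanSpace ℝ (Fin N) | K ≤ ⟪z, c - y⟫} := by
    apply convexHull_min _ (convex_halfSpace_ge hlin K)
    intro p' hp'
    have hf : T - δ ≤ dist p' y := hσfar p' hp'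
    have h1 : (T - δ) ^ 2 ≤ ‖p' - y‖ ^ 2 := by
      rw [← dist_eq_norm]
      exact pow_le_pow_left₀ hTδ hf 2
    have h2 : ‖p' - c‖ ^ 2 ≤ ρ ^ 2 := by
      rw [← dist_eq_norm]
      exact pow_le_pow_left₀ dist_nonneg (hsmall hp') 2
    have h3 := hid p'
    simp only [mem_setOf_eq]
    linarith
  have hxK : K ≤ ⟪x, c - y⟫ := hhalf hx
  have hxfar : (T - δ) ^ 2 - ρ ^ 2 ≤ ‖x - y‖ ^ 2 := by
    have h1 := hid x
    have h2 : ‖x - c‖ ^ 2 ≤ ρ ^ 2 := by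
      rw [← dist_eq_norm]
      exact pow_le_pow_left₀ dist_nonneg hxc 2
    have h3 : (0:ℝ) ≤ ‖x - c‖ ^ 2 := sq_nonneg _
    linarith
  -- final numeric contradiction
  set D1 : ℝ := dist x y with hD1def
  have hD1n : 0 ≤ D1 := dist_nonneg
  have hxy2 : (T - δ) ^ 2 - ρ ^ 2 ≤ D1 ^ 2 := by
    rw [hD1def, dist_eq_norm]; exact hxfar
  have h1 : 0 ≤ T - d := le_trans (by positivity) hychain
  have h5 : T - d < (87 / 32) * ρ := by
    rw [hTdef] at *
    linarith
  have h6 : (T - d) ^ 2 < ((87 / 32) * ρ) ^ 2 :=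
    pow_lt_pow_left₀ h5 h1 two_ne_zero
  have h2 : ((1 - 1 / 1000) * D1) ^ 2 ≤ (T - d) ^ 2 :=
    pow_le_pow_left₀ (by positivity) hychain 2
  have h7 : ((93 / 32) * ρ) ^ 2 ≤ (T - δ) ^ 2 :=
    pow_le_pow_left₀ (by positivity) (by linarith) 2
  nlinarith [sq_nonneg ρ, mul_pos hρ hρ, hxy2, h2, h6, h7]
end

section
/- Let α and β be two non-degenerate abstract d-simplices in ℝ^N such that α is a Delaunay simplex of the projected point set π_{Aff α}(α ∪ β), and let p = min_{b ∈ π_{Aff α}(β \ α)} (‖b - Z(α)‖ - R(α)) be the protection of α relative to β. Then for every y in the convex hull of β with barycentric coordinates (μ_b)_{b ∈ β}, one has Pow_β(y) ≤ Pow_α(π_{Aff α}(y)) - (p² + 2p·R(α)) · Σ_{b ∈ β \ α} μ_b. -/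
open scoped BigOperators Classical
open Metric Set

/-- Orthogonal projection of `q` onto the affine subspace through `Z` with
direction `D` (for `Z` in the affine hull of a simplex and `D` its direction,
this is the orthogonal projection onto that affine hull). -/
noncomputable def projOnto {N : ℕ} (Z : EuclideanSpace ℝ (Fin N))
    (D : Submodule ℝ (EuclideanSpace ℝ (Fin N))) (q : EuclideanSpace ℝ (Fin N)) :
    EuclideanSpace ℝ (Fin N) :=
  Z + (D.orthogonalProjectionOnto (q - Z) : EuclideanSpace ℝ (Fin N))

lemma sum_norm_sub_sq {E : Type*} [NormedAddCommGroup E] [InnerProductSpace ℝ E]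
    {ι : Type*} (s : Finset ι) (μ : ι → ℝ) (v : ι → E)
    (h1 : ∑ i ∈ s, μ i = 1) (x : E) :
    ∑ i ∈ s, μ i * ‖v i - x‖ ^ 2 =
      (∑ i ∈ s, μ i * ‖v i‖ ^ 2 - ‖∑ i ∈ s, μ i • v i‖ ^ 2)
        + ‖(∑ i ∈ s, μ i • v i) - x‖ ^ 2 := by
  have hinner : (inner ℝ (∑ i ∈ s, μ i • v i) x : ℝ) = ∑ i ∈ s, μ i * inner ℝ (v i) x := by
    rw [sum_inner]
    exact Finset.sum_congr rfl fun i _ => real_inner_smul_left _ _ _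
  have h1' : ∑ i ∈ s, μ i * ‖x‖ ^ 2 = ‖x‖ ^ 2 := by
    rw [← Finset.sum_mul, h1, one_mul]
  have expand : ∀ i ∈ s, μ i * ‖v i - x‖ ^ 2
      = μ i * ‖v i‖ ^ 2 - 2 * (μ i * inner ℝ (v i) x) + μ i * ‖x‖ ^ 2 := by
    intro i _
    rw [@norm_sub_sq_real E _ _ (v i) x]; ring
  rw [Finset.sum_congr rfl expand, Finset.sum_add_distrib, Finset.sum_sub_distrib,
    ← Finset.mul_sum, h1', ← hinner, @norm_sub_sq_real E _ _ _ x]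
  ring

set_option maxHeartbeats 1000000 in
/-- **Basic bound on power distances (protection bound).**
Let `α`, `β` be non-degenerate `d`-simplices in `ℝ^N`, with `α` Delaunay in the
projection of `α ∪ β` onto `Aff α` (no projected point of `β` strictly inside the
circumsphere of `α`), and let `p` be the protection
`min_{b ∈ β \ α} (‖π_{Aff α}(b) - Z(α)‖ - R(α))`.  Then for every
`y = ∑_{b ∈ β} μ_b b ∈ Conv β`,
`Pow_β(y) ≤ Pow_α(π_{Aff α}(y)) - (p² + 2pR(α)) ∑_{b ∈ β \ α} μ_b`. -/
theorem basic_bound_on_power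
    {N : ℕ} (α β : Finset (EuclideanSpace ℝ (Fin N)))
    (hα : AffineIndependent ℝ (fun p : (α : Set (EuclideanSpace ℝ (Fin N))) => (p : EuclideanSpace ℝ (Fin N))))
    (hβ : AffineIndependent ℝ (fun p : (β : Set (EuclideanSpace ℝ (Fin N))) => (p : EuclideanSpace ℝ (Fin N))))
    (hcard : α.card = β.card)
    (Zα : EuclideanSpace ℝ (Fin N)) (Rα : ℝ)
    (hZα : Zα ∈ affineSpan ℝ (α : Set (EuclideanSpace ℝ (Fin N))))
    (hcircα : ∀ a ∈ α, ‖a - Zα‖ = Rα)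
    (Zβ : EuclideanSpace ℝ (Fin N)) (Rβ : ℝ)
    (hcircβ : ∀ b ∈ β, ‖b - Zβ‖ = Rβ)
    -- `α` is Delaunay in `π_{Aff α}(α ∪ β)`:
    (hdel : ∀ b ∈ β, Rα ≤ ‖projOnto Zα (affineSpan ℝ (α : Set (EuclideanSpace ℝ (Fin N)))).direction b - Zα‖)
    -- the protection of `α` relative to `β`:
    (hne : (β \ α).Nonempty) (p : ℝ)
    (hp : p = (β \ α).inf' hne fun b =>
      ‖projOnto Zα (affineSpan ℝ (α : Set (EuclideanSpace ℝ (Fin N)))).direction b - Zα‖ - Rα)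
    (μ : EuclideanSpace ℝ (Fin N) → ℝ)
    (hμ0 : ∀ b ∈ β, 0 ≤ μ b) (hμ1 : ∑ b ∈ β, μ b = 1)
    (y : EuclideanSpace ℝ (Fin N)) (hy : y = ∑ b ∈ β, μ b • b) :
    ‖y - Zβ‖ ^ 2 - Rβ ^ 2 ≤
      (‖projOnto Zα (affineSpan ℝ (α : Set (EuclideanSpace ℝ (Fin N)))).direction y - Zα‖ ^ 2 - Rα ^ 2)
        - (p ^ 2 + 2 * p * Rα) * ∑ b ∈ β \ α, μ b := by
  classical
  set D := (affineSpan ℝ (α : Set (EuclideanSpace ℝ (Fin N)))).direction with hD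
  set π : EuclideanSpace ℝ (Fin N) → EuclideanSpace ℝ (Fin N) := projOnto Zα D with hπdef
  have hπ_sub : ∀ q, π q - Zα = (D.orthogonalProjectionOnto (q - Zα) : EuclideanSpace ℝ (Fin N)) := by
    intro q; simp [hπdef, projOnto]
  -- Pythagoras
  have hpyth : ∀ q, ‖q - Zα‖ ^ 2 = ‖π q - Zα‖ ^ 2 + ‖q - π q‖ ^ 2 := by
    intro q
    have h1 : π q - Zα ∈ D := by rw [hπ_sub]; exact (D.orthogonalProjectionOnto (q - Zα)).2
    have he : q - π q = (q - Zα) - (D.orthogonalProjectionOnto (q - Zα) : EuclideanSpace ℝ (Fin N)) := by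
      rw [← hπ_sub]; abel
    have h2 : q - π q ∈ Dᗮ := by
      rw [he]; exact Submodule.sub_starProjection_mem_orthogonal (K := D) (q - Zα)
    have hw : (inner ℝ (π q - Zα) (q - π q) : ℝ) = 0 :=
      Submodule.inner_right_of_mem_orthogonal h1 h2
    have hsplit : q - Zα = (π q - Zα) + (q - π q) := by abel
    rw [hsplit, norm_add_sq_real, hw]; ring
  -- points of α are fixed
  have hfix : ∀ b ∈ α, π b = b := by
    intro b hb
    have hmem : b - Zα ∈ D := by
      have := AffineSubspace.vsub_mem_direction (subset_affineSpan ℝ _ hb) hZα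
      simpa using this
    show Zα + (D.orthogonalProjectionOnto (b - Zα) : EuclideanSpace ℝ (Fin N)) = b
    rw [show (D.orthogonalProjectionOnto (b - Zα) : EuclideanSpace ℝ (Fin N)) = b - Zα from Submodule.starProjection_eq_self_iff.mpr hmem]; abel
  -- linearity of the defect
  have hmean : y - π y = ∑ b ∈ β, μ b • (b - π b) := by
    set T : EuclideanSpace ℝ (Fin N) →L[ℝ] EuclideanSpace ℝ (Fin N) :=
      D.subtypeL.comp (D.orthogonalProjectionOnto) with hT
    have hT' : ∀ v, (D.orthogonalProjectionOnto v : EuclideanSpace ℝ (Fin N)) = T v := fun v => rfl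
    have h1 : y - Zα = ∑ b ∈ β, μ b • (b - Zα) := by
      rw [hy]
      simp [smul_sub, Finset.sum_sub_distrib, ← Finset.sum_smul, hμ1]
    calc y - π y = (y - Zα) - T (y - Zα) := by rw [← hT', ← hπ_sub]; abel
      _ = (∑ b ∈ β, μ b • (b - Zα)) - ∑ b ∈ β, μ b • T (b - Zα) := by
          rw [h1, map_sum]
          simp [map_smul]
      _ = ∑ b ∈ β, μ b • ((b - Zα) - T (b - Zα)) := by
          rw [← Finset.sum_sub_distrib]
          exact Finset.sum_congr rfl fun b _ => (smul_sub _ _ _).symm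
      _ = ∑ b ∈ β, μ b • (b - π b) := by
          apply Finset.sum_congr rfl; intro b _
          congr 1
          rw [← hT', ← hπ_sub]; abel
  -- Jensen for the defect
  have hJ : ‖y - π y‖ ^ 2 ≤ ∑ b ∈ β, μ b * ‖b - π b‖ ^ 2 := by
    have hvar := sum_norm_sub_sq β μ (fun b => b - π b) hμ1 (∑ b ∈ β, μ b • (b - π b))
    simp only [sub_self, norm_zero] at hvar
    have hnn : 0 ≤ ∑ b ∈ β, μ b * ‖(b - π b) - ∑ c ∈ β, μ c • (c - π c)‖ ^ 2 :=
      Finset.sum_nonneg fun b hb => mul_nonneg (hμ0 b hb) (sq_nonneg _)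
    rw [hmean]
    nlinarith [hvar, hnn]
  -- change of center
  have hZβsum : ∑ b ∈ β, μ b * ‖b - Zβ‖ ^ 2 = Rβ ^ 2 := by
    rw [Finset.sum_congr rfl (fun b hb => by rw [hcircβ b hb]), ← Finset.sum_mul, hμ1, one_mul]
  have key1 : ‖y - Zβ‖ ^ 2 - Rβ ^ 2 = ‖y - Zα‖ ^ 2 - ∑ b ∈ β, μ b * ‖b - Zα‖ ^ 2 := by
    have h1 := sum_norm_sub_sq β μ (fun b => (b : EuclideanSpace ℝ (Fin N))) hμ1 Zβ
    have h2 := sum_norm_sub_sq β μ (fun b => (b : EuclideanSpace ℝ (Fin N))) hμ1 Zα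
    rw [← hy] at h1 h2
    linarith [hZβsum, h1, h2]
  -- nonnegativity facts
  have hβne : β.Nonempty := ⟨hne.choose, (Finset.mem_sdiff.1 hne.choose_spec).1⟩
  have hαne : α.Nonempty := Finset.card_pos.1 (hcard ▸ Finset.card_pos.2 hβne)
  have hRα0 : 0 ≤ Rα := by
    obtain ⟨a, ha⟩ := hαne
    rw [← hcircα a ha]; exact norm_nonneg _
  have hp0 : 0 ≤ p := by
    rw [hp]
    apply Finset.le_inf'
    intro b hb
    have := hdel b (Finset.mem_sdiff.1 hb).1
    linarith
  -- the lower bound on the projected sum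
  have hsplitset : ∑ b ∈ β \ α, (fun b => μ b * ‖π b - Zα‖ ^ 2) b
      + ∑ b ∈ β ∩ α, (fun b => μ b * ‖π b - Zα‖ ^ 2) b
      = ∑ b ∈ β, μ b * ‖π b - Zα‖ ^ 2 := by
    rw [← Finset.sdiff_inter_self_left β α]
    exact Finset.sum_sdiff Finset.inter_subset_left
  have hμsplit : ∑ b ∈ β \ α, μ b + ∑ b ∈ β ∩ α, μ b = 1 := by
    rw [← hμ1, ← Finset.sdiff_inter_self_left β α]
    exact Finset.sum_sdiff Finset.inter_subset_left
  have h2 : ∑ b ∈ β ∩ α, μ b * ‖π b - Zα‖ ^ 2 = (∑ b ∈ β ∩ α, μ b) * Rα ^ 2 := by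
    rw [Finset.sum_mul]
    apply Finset.sum_congr rfl
    intro b hb
    have hbα := (Finset.mem_inter.1 hb).2
    rw [hfix b hbα, hcircα b hbα]
  have h3 : (∑ b ∈ β \ α, μ b) * (Rα + p) ^ 2 ≤ ∑ b ∈ β \ α, μ b * ‖π b - Zα‖ ^ 2 := by
    rw [Finset.sum_mul]
    apply Finset.sum_le_sum
    intro b hb
    have hbβ := (Finset.mem_sdiff.1 hb).1
    have hple : p ≤ ‖π b - Zα‖ - Rα := by
      rw [hp]; exact Finset.inf'_le _ hb
    have hsq : (Rα + p) ^ 2 ≤ ‖π b - Zα‖ ^ 2 := by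
      nlinarith [hdel b hbβ, norm_nonneg (π b - Zα)]
    exact mul_le_mul_of_nonneg_left hsq (hμ0 b hbβ)
  have hS0 : 0 ≤ ∑ b ∈ β \ α, μ b :=
    Finset.sum_nonneg fun b hb => hμ0 b (Finset.mem_sdiff.1 hb).1
  have hsum : Rα ^ 2 + (p ^ 2 + 2 * p * Rα) * ∑ b ∈ β \ α, μ b
      ≤ ∑ b ∈ β, μ b * ‖π b - Zα‖ ^ 2 := by
    have heq : (∑ b ∈ β \ α, μ b) * (Rα + p) ^ 2 + (∑ b ∈ β ∩ α, μ b) * Rα ^ 2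
        = Rα ^ 2 + (p ^ 2 + 2 * p * Rα) * ∑ b ∈ β \ α, μ b := by
      have h4 : ∑ b ∈ β ∩ α, μ b = 1 - ∑ b ∈ β \ α, μ b := by linarith [hμsplit]
      rw [h4]; ring
    linarith [hsplitset, h2, h3, heq]
  -- pythagoras sums
  have hsum2 : ∑ b ∈ β, μ b * ‖b - Zα‖ ^ 2
      = ∑ b ∈ β, μ b * ‖π b - Zα‖ ^ 2 + ∑ b ∈ β, μ b * ‖b - π b‖ ^ 2 := by
    rw [← Finset.sum_add_distrib]
    apply Finset.sum_congr rfl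
    intro b _
    rw [hpyth b]; ring
  have hpy := hpyth y
  linarith [hJ, hsum, key1, hpy, hsum2]
end

section
/- Let K be a finite simplicial complex, and for each d-simplex α of K let W(α) ≥ W_min(α) > 0 be weights. Suppose there is a measure space D, measurable sets Ã_α ⊆ D for each d-simplex α, and an integrable f : D → ℝ with W_min(α) = ∫_{Ã_α} f. Define the d-chain γ_min by γ_min(α) = 1 if W_min(α) = W(α) and 0 otherwise, and assume Σ_α γ_min(α)·1_{Ã_α}(x) = 1 for almost all x ∈ D. Then among all real d-chains γ satisfying Σ_α γ(α)·1_{Ã_α}(x) = 1 for almost all x ∈ D, the weighted ℓ1-norm ‖γ‖_{1,W} = Σ_α W(α)|γ(α)| attains its minimum at a unique chain, namely γ = γ_min. -/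
open scoped BigOperators
open MeasureTheory Set

/-
Integrating `f` against the a.e. identity `∑ α, γ α * 1_{A α} = 1` shows that every admissible
chain has the same `Wmin`-cost `∑ α, γ α * Wmin α = ∫ f`, which bounds `‖γ‖_{1,W}` from below and
is attained by `γmin`. Equality forces `γ` to vanish wherever `Wmin < W`; on the remaining
simplices the cells `A α` cover `D` a.e. exactly once, so at a typical point of `A α` (a set of
positive measure, as `∫_{A α} f > 0`) the constraint on `γ` reads `γ α = 1`.
-/

theorem Finset.sum_eq_of_card_filter_eq_one {ι M : Type*} [AddCommMonoid M]
    {s : Finset ι} {p : ι → Prop} [DecidablePred p] {g : ι → M}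
    (hg : ∀ i, ¬p i → g i = 0) (hs : (s.filter p).card = 1) {a : ι} (ha : a ∈ s) (hpa : p a) :
    ∑ i ∈ s, g i = g a := by
  obtain ⟨b, hb⟩ := Finset.card_eq_one.mp hs
  have hab : a = b := Finset.mem_singleton.mp (hb ▸ Finset.mem_filter.mpr ⟨ha, hpa⟩)
  rw [← Finset.sum_filter_of_ne fun i _ hi => not_imp_comm.mp (hg i) hi, hb, hab,
    Finset.sum_singleton]

section

variable {ι D : Type*} [Fintype ι]

open Classical in
theorem sum_mul_indicator_one_eq_sum_filter_mem (A : ι → Set D) (c : ι → ℝ) (x : D) :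
    ∑ i, c i * (A i).indicator (fun _ => (1 : ℝ)) x =
      ∑ i ∈ Finset.univ.filter (fun i => x ∈ A i), c i := by
  rw [Finset.sum_filter]
  refine Finset.sum_congr rfl fun i _ => ?_
  by_cases hx : x ∈ A i <;> simp [hx]

theorem integral_eq_sum_smul_setIntegral_of_ae_sum_mul_indicator_eq_one
    [MeasurableSpace D] {E : Type*} [NormedAddCommGroup E] [NormedSpace ℝ E]
    {μ : Measure D} {A : ι → Set D} (hA : ∀ i, MeasurableSet (A i))
    {f : D → E} (hf : Integrable f μ) {c : ι → ℝ}
    (hc : ∀ᵐ x ∂μ, ∑ i, c i * (A i).indicator (fun _ => (1 : ℝ)) x = 1) :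
    ∫ x, f x ∂μ = ∑ i, c i • ∫ x in A i, f x ∂μ := by
  have hpt : ∀ᵐ x ∂μ, f x = ∑ i, c i • (A i).indicator f x := by
    filter_upwards [hc] with x hx
    calc f x = (∑ i, c i * (A i).indicator (fun _ => (1 : ℝ)) x) • f x := by rw [hx, one_smul]
      _ = ∑ i, c i • (A i).indicator f x := by
        rw [Finset.sum_smul]
        refine Finset.sum_congr rfl fun i _ => ?_
        by_cases hxi : x ∈ A i <;> simp [hxi]
  have hint (i : ι) : Integrable (fun x => c i • (A i).indicator f x) μ :=
    (hf.indicator (hA i)).smul (c i)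
  rw [integral_congr_ae hpt, integral_finsetSum _ fun i _ => hint i]
  simp_rw [integral_smul, integral_indicator (hA _)]

theorem mul_le_mul_abs_of_le {m w γ : ℝ} (hm : 0 ≤ m) (hmw : m ≤ w) : γ * m ≤ w * |γ| :=
  calc γ * m ≤ |γ| * m := mul_le_mul_of_nonneg_right (le_abs_self γ) hm
    _ ≤ w * |γ| := by rw [mul_comm]; exact mul_le_mul_of_nonneg_right hmw (abs_nonneg γ)

theorem eq_zero_of_mul_abs_le_mul {m w γ : ℝ} (hm : 0 ≤ m) (hmw : m < w)
    (h : w * |γ| ≤ γ * m) : γ = 0 := by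
  have : (w - m) * |γ| ≤ 0 := by nlinarith [le_abs_self γ]
  exact abs_eq_zero.mp
    (le_antisymm (nonpos_of_mul_nonpos_right this (sub_pos.mpr hmw)) (abs_nonneg γ))

theorem sum_mul_indicator_one_eq_apply_of_cover (A : ι → Set D) (p : ι → Prop) [DecidablePred p]
    {γ : ι → ℝ} (hγ : ∀ i, ¬p i → γ i = 0) {x : D}
    (hx : ∑ i, (if p i then 1 else 0) * (A i).indicator (fun _ => (1 : ℝ)) x = 1)
    {a : ι} (hxa : x ∈ A a) (hpa : p a) :
    ∑ i, γ i * (A i).indicator (fun _ => (1 : ℝ)) x = γ a := by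
  classical
  rw [sum_mul_indicator_one_eq_sum_filter_mem, Finset.sum_boole] at hx
  rw [sum_mul_indicator_one_eq_sum_filter_mem]
  exact Finset.sum_eq_of_card_filter_eq_one hγ (by exact_mod_cast hx) (by simpa using hxa) hpa

theorem apply_eq_one_of_ae_cover [MeasurableSpace D] {μ : Measure D} (A : ι → Set D)
    (p : ι → Prop) [DecidablePred p] {γ : ι → ℝ} (hγ : ∀ i, ¬p i → γ i = 0)
    (hcover : ∀ᵐ x ∂μ, ∑ i, (if p i then 1 else 0) * (A i).indicator (fun _ => (1 : ℝ)) x = 1)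
    (hsum : ∀ᵐ x ∂μ, ∑ i, γ i * (A i).indicator (fun _ => (1 : ℝ)) x = 1)
    {a : ι} (hpa : p a) (hμa : μ (A a) ≠ 0) : γ a = 1 := by
  obtain ⟨x, hxa, hcx, hγx⟩ :=
    Measure.exists_mem_of_measure_ne_zero_of_ae hμa (ae_restrict_of_ae (hcover.and hsum))
  rw [← hγx, sum_mul_indicator_one_eq_apply_of_cover A p hγ hcx hxa hpa]

end

/-- **Weighted `ℓ¹` minimization over chains (technical lemma).**
Let `ι` index the `d`-simplices of a finite complex `K`, with weights
`W α ≥ Wmin α > 0`.  Suppose there are measurable sets `A α ⊆ D` in a measure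
space `(D, μ)` and an integrable `f : D → ℝ` with `Wmin α = ∫_{A α} f`.
Define `γmin α = 1` if `Wmin α = W α` and `0` otherwise, and assume
`∑ α, γmin α · 1_{A α} = 1` a.e. on `D`.  Then among all real chains `γ`
satisfying `∑ α, γ α · 1_{A α} = 1` a.e., the weighted norm
`‖γ‖_{1,W} = ∑ α, W α |γ α|` attains its minimum exactly at `γ = γmin`. -/
theorem weighted_l1_min_unique
    {ι : Type*} [Fintype ι]
    {D : Type*} [MeasurableSpace D] (μ : Measure D)
    (W Wmin : ι → ℝ)
    (hWpos : ∀ α, 0 < Wmin α) (hW : ∀ α, Wmin α ≤ W α)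
    (A : ι → Set D) (hA : ∀ α, MeasurableSet (A α))
    (f : D → ℝ) (hf : Integrable f μ)
    (hWmin : ∀ α, Wmin α = ∫ x in A α, f x ∂μ)
    (γmin : ι → ℝ)
    (hγmin : γmin = fun α => if Wmin α = W α then (1 : ℝ) else 0)
    (hcover : ∀ᵐ x ∂μ, ∑ α, γmin α * (A α).indicator (fun _ => (1 : ℝ)) x = 1) :
    ∀ γ : ι → ℝ,
      (∀ᵐ x ∂μ, ∑ α, γ α * (A α).indicator (fun _ => (1 : ℝ)) x = 1) →
      (∑ α, W α * |γmin α| ≤ ∑ α, W α * |γ α|) ∧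
      (∑ α, W α * |γ α| = ∑ α, W α * |γmin α| → γ = γmin) := by
  intro γ hγ
  subst hγmin
  have hcost (c : ι → ℝ) (hc : ∀ᵐ x ∂μ, ∑ α, c α * (A α).indicator (fun _ => (1 : ℝ)) x = 1) :
      ∑ α, c α * Wmin α = ∫ x, f x ∂μ := by
    simp_rw [integral_eq_sum_smul_setIntegral_of_ae_sum_mul_indicator_eq_one hA hf hc, hWmin,
      smul_eq_mul]
  have hle (α : ι) : γ α * Wmin α ≤ W α * |γ α| := mul_le_mul_abs_of_le (hWpos α).le (hW α)
  have hmin : ∑ α, W α * |(if Wmin α = W α then (1 : ℝ) else 0)| = ∫ x, f x ∂μ := by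
    rw [← hcost _ hcover]
    refine Finset.sum_congr rfl fun α _ => ?_
    split_ifs with h <;> simp [h]
  refine ⟨?_, fun heq => ?_⟩
  · calc _ = ∫ x, f x ∂μ := hmin
      _ = ∑ α, γ α * Wmin α := (hcost γ hγ).symm
      _ ≤ ∑ α, W α * |γ α| := Finset.sum_le_sum fun α _ => hle α
  have hterm : ∀ α ∈ Finset.univ, γ α * Wmin α = W α * |γ α| :=
    (Finset.sum_eq_sum_iff_of_le fun α _ => hle α).mp (by rw [hcost γ hγ, heq, hmin])
  have hsupp (α : ι) (h : ¬Wmin α = W α) : γ α = 0 :=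
    eq_zero_of_mul_abs_le_mul (hWpos α).le (lt_of_le_of_ne (hW α) h)
      (hterm α (Finset.mem_univ α)).ge
  funext α
  split_ifs with h
  · refine apply_eq_one_of_ae_cover A _ hsupp hcover hγ h fun h0 => (hWpos α).ne' ?_
    rw [hWmin, setIntegral_measure_zero f h0]
  · exact hsupp α h
end

section
/- With the notation of the weighted ℓ1 minimization lemma (chains on K, weights W ≥ W_min > 0, sets Ã_α with W_min(α) = ∫_{Ã_α} f, and γ_min defined by γ_min(α) = 1 iff W(α) = W_min(α)): for every d-chain γ satisfying the covering constraint Σ_α γ(α)·1_{Ã_α} = 1 almost everywhere on D, one has the chain of inequalities ‖γ‖_{1,W} ≥ ‖γ‖_{1,W_min} ≥ ∫_D f = ‖γ_min‖_{1,W_min} = ‖γ_min‖_{1,W}. -/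
open scoped BigOperators
open MeasureTheory Set

/-- **Chain of inequalities in the weighted `ℓ¹` minimization lemma.**
With weights `W α ≥ Wmin α > 0`, sets `A α` with `Wmin α = ∫_{A α} f` for a
nonnegative integrable `f`, and `γmin α = 1` iff `W α = Wmin α` (else `0`)
satisfying the covering condition a.e., every chain `γ` with
`∑ α, γ α · 1_{A α} = 1` a.e. satisfies
`‖γ‖_{1,W} ≥ ‖γ‖_{1,Wmin} ≥ ∫_D f = ‖γmin‖_{1,Wmin} = ‖γmin‖_{1,W}`. -/
theorem weighted_l1_chain_of_inequalities
    {ι : Type*} [Fintype ι]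
    {D : Type*} [MeasurableSpace D] (μ : Measure D)
    (W Wmin : ι → ℝ)
    (hWpos : ∀ α, 0 < Wmin α) (hW : ∀ α, Wmin α ≤ W α)
    (A : ι → Set D) (hA : ∀ α, MeasurableSet (A α))
    (f : D → ℝ) (hf : Integrable f μ) (hfpos : 0 ≤ f)
    (hWmin : ∀ α, Wmin α = ∫ x in A α, f x ∂μ)
    (γmin : ι → ℝ)
    (hγmin : γmin = fun α => if Wmin α = W α then (1 : ℝ) else 0)
    (hcover : ∀ᵐ x ∂μ, ∑ α, γmin α * (A α).indicator (fun _ => (1 : ℝ)) x = 1)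
    (γ : ι → ℝ)
    (hγ : ∀ᵐ x ∂μ, ∑ α, γ α * (A α).indicator (fun _ => (1 : ℝ)) x = 1) :
    (∑ α, Wmin α * |γ α| ≤ ∑ α, W α * |γ α|) ∧
    (∫ x, f x ∂μ ≤ ∑ α, Wmin α * |γ α|) ∧
    (∑ α, Wmin α * |γmin α| = ∫ x, f x ∂μ) ∧
    (∑ α, W α * |γmin α| = ∑ α, Wmin α * |γmin α|) := by

  have key : ∀ c : ι → ℝ,
      (∀ᵐ x ∂μ, ∑ α, c α * (A α).indicator (fun _ => (1 : ℝ)) x = 1) →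
      ∑ α, c α * Wmin α = ∫ x, f x ∂μ := by
    intro c hc
    have h1 : ∫ x, f x ∂μ = ∫ x, ∑ α, c α * (A α).indicator f x ∂μ := by
      refine integral_congr_ae ?_
      filter_upwards [hc] with x hx
      have h2 : ∑ α, c α * (A α).indicator f x
          = (∑ α, c α * (A α).indicator (fun _ => (1 : ℝ)) x) * f x := by
        rw [Finset.sum_mul]
        refine Finset.sum_congr rfl fun α _ => ?_
        by_cases h : x ∈ A α
        · simp [Set.indicator_of_mem h, mul_assoc]
        · simp [Set.indicator_of_notMem h]
      rw [h2, hx, one_mul]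
    rw [h1, integral_finset_sum _ (fun α _ => (hf.indicator (hA α)).const_mul _)]
    refine (Finset.sum_congr rfl fun α _ => ?_).symm
    rw [integral_const_mul, integral_indicator (hA α), ← hWmin α]
  refine ⟨?_, ?_, ?_, ?_⟩
  · exact Finset.sum_le_sum fun α _ =>
      mul_le_mul_of_nonneg_right (hW α) (abs_nonneg _)
  · rw [← key γ hγ]
    refine Finset.sum_le_sum fun α _ => ?_
    rw [mul_comm]
    exact mul_le_mul_of_nonneg_left (le_abs_self _) (hWpos α).le
  · rw [← key γmin hcover]
    refine Finset.sum_congr rfl fun α _ => ?_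
    subst hγmin
    by_cases h : Wmin α = W α <;> simp [h, mul_comm]
  · refine Finset.sum_congr rfl fun α _ => ?_
    subst hγmin
    by_cases h : Wmin α = W α <;> simp [h]
end

section
/- Let V₁, V₂, V₃ be d-dimensional linear subspaces of ℝ^N each making an angle strictly less than π/4 with a fixed d-dimensional subspace V. Then the composite orthogonal projection map (π_{V₁}|_{V₃}) ∘ (π_{V₃}|_{V₂}) ∘ (π_{V₂}|_{V₁}) : V₁ → V₁ has positive determinant. -/
open Module

/-- The angle between two subspaces of an inner product space:
`∠(V₀, V₁) = max_{v₀ ∈ V₀, v₀ ≠ 0} min_{v₁ ∈ V₁, v₁ ≠ 0} ∠(v₀, v₁)`. -/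
noncomputable def subspaceAngle {E : Type*} [NormedAddCommGroup E] [InnerProductSpace ℝ E]
    (V₀ V₁ : Submodule ℝ E) : ℝ :=
  sSup {θ : ℝ | ∃ v₀ ∈ V₀, v₀ ≠ 0 ∧
    θ = sInf {φ : ℝ | ∃ v₁ ∈ V₁, v₁ ≠ 0 ∧ φ = InnerProductGeometry.angle v₀ v₁}}

local notation "⟪" x ", " y "⟫" => @inner ℝ _ _ x y

/-- An endomorphism of a finite-dimensional real inner product space with
positive-definite quadratic form has positive determinant. -/
lemma det_pos_of_inner_pos {E : Type*} [NormedAddCommGroup E] [InnerProductSpace ℝ E]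
    [FiniteDimensional ℝ E] (T : E →ₗ[ℝ] E)
    (h : ∀ v : E, v ≠ 0 → 0 < ⟪T v, v⟫) : 0 < LinearMap.det T := by
  set Tc : E →L[ℝ] E := LinearMap.toContinuousLinearMap T with hTc
  set g : ℝ → (E →L[ℝ] E) := fun t => (1 - t) • (ContinuousLinearMap.id ℝ E) + t • Tc with hg
  have hgc : Continuous g := by fun_prop
  set f : ℝ → ℝ := fun t => (g t).det with hf
  have hfc : Continuous f := ContinuousLinearMap.continuous_det.comp hgc
  have hpos : ∀ t ∈ Set.Icc (0:ℝ) 1, ∀ v : E, v ≠ 0 → 0 < ⟪(g t) v, v⟫ := by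
    intro t ht v hv
    have h1 : ((g t) v : E) = (1 - t) • v + t • (T v) := by
      simp [hg, hTc]
    rw [h1, inner_add_left, real_inner_smul_left, real_inner_smul_left]
    have h2 : 0 < ⟪T v, v⟫ := h v hv
    have h3 : (0:ℝ) < ⟪v, v⟫ := by rw [real_inner_self_eq_norm_sq]; have := norm_ne_zero_iff.mpr hv; positivity
    rcases ht with ⟨ht0, ht1⟩
    rcases lt_or_eq_of_le ht0 with ht0' | ht0'
    · nlinarith
    · nlinarith
  have hne : ∀ t ∈ Set.Icc (0:ℝ) 1, f t ≠ 0 := by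
    intro t ht hdet
    have hker := LinearMap.bot_lt_ker_of_det_eq_zero (f := ((g t) : E →ₗ[ℝ] E)) hdet
    obtain ⟨v, hv, hv0⟩ := Submodule.exists_mem_ne_zero_of_ne_bot (bot_lt_iff_ne_bot.mp hker)
    have := hpos t ht v hv0
    rw [LinearMap.mem_ker] at hv
    rw [show ((g t) v : E) = ((g t : E →ₗ[ℝ] E)) v from rfl, hv] at this
    simp at this
  have hf0 : f 0 = 1 := by
    have : g 0 = ContinuousLinearMap.id ℝ E := by simp [hg]
    simp [hf, this, ContinuousLinearMap.det]
  have hf1 : f 1 = LinearMap.det T := by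
    have : g 1 = Tc := by simp [hg]
    simp [hf, this, ContinuousLinearMap.det, hTc]
  by_contra hle
  push_neg at hle
  have hlt : f 1 < 0 := lt_of_le_of_ne (hf1 ▸ hle) (hf1 ▸ hne 1 ⟨zero_le_one, le_refl 1⟩)
  have : (0:ℝ) ∈ Set.Icc (f 1) (f 0) := ⟨le_of_lt hlt, by rw [hf0]; exact zero_le_one⟩
  obtain ⟨t, ht, hft⟩ := intermediate_value_Icc' (zero_le_one) (hfc.continuousOn) this
  exact hne t ht hft

/-- If the subspace angle between `W` and `V` is less than `π/4`, then every nonzero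
vector of `W` has large projection onto `V`. -/
lemma norm_lt_sqrt_two_mul_norm_proj {E : Type*} [NormedAddCommGroup E] [InnerProductSpace ℝ E]
    [FiniteDimensional ℝ E] (W V : Submodule ℝ E) (hVnt : ∃ v ∈ V, v ≠ 0)
    (ha : subspaceAngle W V < Real.pi / 4) {x : E} (hx : x ∈ W) (hx0 : x ≠ 0) :
    ‖x‖ < Real.sqrt 2 * ‖(Submodule.orthogonalProjectionOnto V x : E)‖ := by
  obtain ⟨v₀, hv₀, hv₀0⟩ := hVnt
  set A : Set ℝ := {φ : ℝ | ∃ v₁ ∈ V, v₁ ≠ 0 ∧ φ = InnerProductGeometry.angle x v₁} with hA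
  have hAne : A.Nonempty := ⟨_, v₀, hv₀, hv₀0, rfl⟩
  have hAbdd : BddBelow A := ⟨0, by rintro φ ⟨v, hv, hv0, rfl⟩; exact InnerProductGeometry.angle_nonneg _ _⟩
  -- the sInf over A is bounded by the sSup defining the subspace angle
  have hmem : sInf A ∈ {θ : ℝ | ∃ v₀ ∈ W, v₀ ≠ 0 ∧
      θ = sInf {φ : ℝ | ∃ v₁ ∈ V, v₁ ≠ 0 ∧ φ = InnerProductGeometry.angle v₀ v₁}} :=
    ⟨x, hx, hx0, rfl⟩
  have hbdd : BddAbove {θ : ℝ | ∃ v₀ ∈ W, v₀ ≠ 0 ∧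
      θ = sInf {φ : ℝ | ∃ v₁ ∈ V, v₁ ≠ 0 ∧ φ = InnerProductGeometry.angle v₀ v₁}} := by
    refine ⟨Real.pi, ?_⟩
    rintro θ ⟨y, hy, hy0, rfl⟩
    have hne : ({φ : ℝ | ∃ v₁ ∈ V, v₁ ≠ 0 ∧ φ = InnerProductGeometry.angle y v₁}).Nonempty :=
      ⟨_, v₀, hv₀, hv₀0, rfl⟩
    have hbb : BddBelow {φ : ℝ | ∃ v₁ ∈ V, v₁ ≠ 0 ∧ φ = InnerProductGeometry.angle y v₁} :=
      ⟨0, by rintro φ ⟨v, hv, hv0, rfl⟩; exact InnerProductGeometry.angle_nonneg _ _⟩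
    calc sInf {φ : ℝ | ∃ v₁ ∈ V, v₁ ≠ 0 ∧ φ = InnerProductGeometry.angle y v₁}
        ≤ InnerProductGeometry.angle y v₀ := csInf_le hbb ⟨v₀, hv₀, hv₀0, rfl⟩
      _ ≤ Real.pi := InnerProductGeometry.angle_le_pi _ _
  have hlt : sInf A < Real.pi / 4 := lt_of_le_of_lt (le_csSup hbdd hmem) ha
  obtain ⟨φ, hφA, hφlt⟩ := exists_lt_of_csInf_lt hAne hlt
  obtain ⟨v, hv, hv0, rfl⟩ := hφA
  -- from angle < π/4 deduce a lower bound on the inner product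
  have hcos : Real.cos (Real.pi / 4) < Real.cos (InnerProductGeometry.angle x v) :=
    Real.cos_lt_cos_of_nonneg_of_le_pi (InnerProductGeometry.angle_nonneg _ _)
      (by linarith [Real.pi_pos]) hφlt
  rw [Real.cos_pi_div_four, InnerProductGeometry.cos_angle] at hcos
  have hxn : (0:ℝ) < ‖x‖ := norm_pos_iff.mpr hx0
  have hvn : (0:ℝ) < ‖v‖ := norm_pos_iff.mpr hv0
  have hinner : Real.sqrt 2 / 2 * (‖x‖ * ‖v‖) < ⟪x, v⟫ := by
    rw [lt_div_iff₀ (by positivity)] at hcos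
    linarith
  -- replace x by its projection
  have hproj : ⟪x, v⟫ = ⟪(Submodule.orthogonalProjectionOnto V x : E), v⟫ := by
    have h0 : ⟪x - (Submodule.orthogonalProjectionOnto V x : E), v⟫ = 0 :=
      Submodule.starProjection_inner_eq_zero x v hv
    rw [inner_sub_left] at h0
    linarith [h0]
  have hcs : ⟪(Submodule.orthogonalProjectionOnto V x : E), v⟫ ≤ ‖(Submodule.orthogonalProjectionOnto V x : E)‖ * ‖v‖ :=
    real_inner_le_norm _ _
  have hs2 : Real.sqrt 2 * Real.sqrt 2 = 2 := Real.mul_self_sqrt (by norm_num)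
  have hs2pos : (0:ℝ) < Real.sqrt 2 := by positivity
  have key : Real.sqrt 2 / 2 * (‖x‖ * ‖v‖) < ‖(Submodule.orthogonalProjectionOnto V x : E)‖ * ‖v‖ :=
    lt_of_lt_of_le (hproj ▸ hinner) hcs
  have key2 : Real.sqrt 2 / 2 * ‖x‖ < ‖(Submodule.orthogonalProjectionOnto V x : E)‖ := by
    nlinarith [key, hvn]
  nlinarith [key2, hs2, hs2pos, norm_nonneg (Submodule.orthogonalProjectionOnto V x : E)]

/-- Adjoint bound: if every nonzero vector of `W` has large projection on `V` and the
projection `W → V` is surjective, then every vector of `V` is close to `W`. -/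
lemma dist_proj_lt {E : Type*} [NormedAddCommGroup E] [InnerProductSpace ℝ E]
    [FiniteDimensional ℝ E] (W V : Submodule ℝ E)
    (hb : ∀ x ∈ W, x ≠ 0 → ‖x‖ < Real.sqrt 2 * ‖(Submodule.orthogonalProjectionOnto V x : E)‖)
    (hsurj : ∀ w ∈ V, ∃ x ∈ W, (Submodule.orthogonalProjectionOnto V x : E) = w)
    {w : E} (hw : w ∈ V) (hw0 : w ≠ 0) :
    Real.sqrt 2 * ‖w - (Submodule.orthogonalProjectionOnto W w : E)‖ < ‖w‖ := by
  obtain ⟨x, hxW, hx⟩ := hsurj w hw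
  have hx0 : x ≠ 0 := by
    rintro rfl
    apply hw0
    rw [← hx]; simp
  have hs2 : Real.sqrt 2 * Real.sqrt 2 = 2 := Real.mul_self_sqrt (by norm_num)
  have hwpos : (0:ℝ) < ‖w‖ := norm_pos_iff.mpr hw0
  set q : E := (Submodule.orthogonalProjectionOnto W w : E) with hq
  -- ⟪x, w⟫ = ‖w‖ ^ 2
  have h1 : ⟪x, w⟫ = ‖w‖ ^ 2 := by
    have h0 : ⟪x - (Submodule.orthogonalProjectionOnto V x : E), w⟫ = 0 :=
      Submodule.starProjection_inner_eq_zero x w hw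
    rw [inner_sub_left, sub_eq_zero] at h0
    rw [h0, hx, real_inner_self_eq_norm_sq]
  -- ⟪x, q⟫ = ⟪x, w⟫
  have h2 : ⟪x, q⟫ = ⟪x, w⟫ := by
    have h0 : ⟪w - q, x⟫ = 0 := Submodule.starProjection_inner_eq_zero w x hxW
    rw [inner_sub_left, sub_eq_zero] at h0
    rw [real_inner_comm q x, real_inner_comm w x]; exact h0.symm
  have h3 : ‖w‖ ^ 2 ≤ ‖x‖ * ‖q‖ := by
    rw [← h1, ← h2]
    exact real_inner_le_norm _ _
  have hxw : ‖x‖ < Real.sqrt 2 * ‖w‖ := by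
    have := hb x hxW hx0
    rwa [hx] at this
  have hq0 : (0:ℝ) < ‖q‖ := by
    rcases (norm_nonneg q).lt_or_eq with h | h
    · exact h
    · exfalso; rw [← h, mul_zero] at h3; nlinarith
  have hwq : ‖w‖ < Real.sqrt 2 * ‖q‖ := by nlinarith
  -- Pythagoras
  have horth : ⟪q, w - q⟫ = 0 := by
    rw [← real_inner_comm]
    exact Submodule.starProjection_inner_eq_zero w q (Submodule.orthogonalProjectionOnto W w).2
  have hpyth : ‖w‖ ^ 2 = ‖q‖ ^ 2 + ‖w - q‖ ^ 2 := by
    have hw' : w = q + (w - q) := by abel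
    calc ‖w‖ ^ 2 = ‖q + (w - q)‖ ^ 2 := by rw [← hw']
      _ = ‖q‖ ^ 2 + 2 * ⟪q, w - q⟫ + ‖w - q‖ ^ 2 := norm_add_sq_real _ _
      _ = ‖q‖ ^ 2 + ‖w - q‖ ^ 2 := by rw [horth]; ring
  have : (Real.sqrt 2 * ‖w - q‖) ^ 2 < ‖w‖ ^ 2 := by nlinarith
  exact lt_of_pow_lt_pow_left₀ 2 (norm_nonneg w) this

/-- Key positivity estimate for the conjugated projection factor. -/
lemma inner_proj_pos {E : Type*} [NormedAddCommGroup E] [InnerProductSpace ℝ E]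
    [FiniteDimensional ℝ E] (Vi : Submodule ℝ E) {u w : E}
    (hu : ‖u‖ < Real.sqrt 2 * ‖w‖)
    (huw : ⟪u, w⟫ = ‖w‖ ^ 2)
    (hs : Real.sqrt 2 * ‖w - (Submodule.orthogonalProjectionOnto Vi w : E)‖ < ‖w‖)
    (hw0 : w ≠ 0) :
    0 < ⟪(Submodule.orthogonalProjectionOnto Vi u : E), w⟫ := by
  have hs2 : Real.sqrt 2 * Real.sqrt 2 = 2 := Real.mul_self_sqrt (by norm_num)
  have hwpos : (0:ℝ) < ‖w‖ := norm_pos_iff.mpr hw0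
  set p : E := (Submodule.orthogonalProjectionOnto Vi u : E) with hp
  set q : E := (Submodule.orthogonalProjectionOnto Vi w : E) with hq
  set r : E := u - p with hr
  set s : E := w - q with hsdef
  -- ⟪p, w⟫ = ‖w‖^2 - ⟪r, s⟫
  have hrq : ⟪r, q⟫ = 0 := Submodule.starProjection_inner_eq_zero u q (Submodule.orthogonalProjectionOnto Vi w).2
  have hsplit : ⟪p, w⟫ = ‖w‖ ^ 2 - ⟪r, s⟫ := by
    have h1 : ⟪p, w⟫ = ⟪u, w⟫ - ⟪r, w⟫ := by
      rw [show p = u - r by rw [hr]; abel, inner_sub_left]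
    have h2 : ⟪r, w⟫ = ⟪r, q⟫ + ⟪r, s⟫ := by
      rw [show w = q + s by rw [hsdef]; abel, inner_add_right]
    rw [h1, h2, hrq, huw]; ring
  rw [hsplit]
  -- bound |⟪r, s⟫|
  have habs : |⟪r, s⟫| ≤ ‖r‖ * ‖s‖ := abs_real_inner_le_norm _ _
  -- ‖r‖ ≤ ‖u‖
  have hru : ‖r‖ ≤ ‖u‖ := by
    have horth : ⟪p, r⟫ = 0 := by
      rw [← real_inner_comm]
      exact Submodule.starProjection_inner_eq_zero u p (Submodule.orthogonalProjectionOnto Vi u).2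
    have hpyth : ‖u‖ ^ 2 = ‖p‖ ^ 2 + ‖r‖ ^ 2 := by
      have hu' : u = p + r := by rw [hr]; abel
      calc ‖u‖ ^ 2 = ‖p + r‖ ^ 2 := by rw [← hu']
        _ = ‖p‖ ^ 2 + 2 * ⟪p, r⟫ + ‖r‖ ^ 2 := norm_add_sq_real _ _
        _ = ‖p‖ ^ 2 + ‖r‖ ^ 2 := by rw [horth]; ring
    nlinarith [norm_nonneg r, norm_nonneg u, norm_nonneg p]
  have hfin : ‖r‖ * ‖s‖ < ‖w‖ ^ 2 := by
    have h1 : ‖r‖ * ‖s‖ ≤ ‖u‖ * ‖s‖ := mul_le_mul_of_nonneg_right hru (norm_nonneg s)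
    nlinarith [mul_le_mul_of_nonneg_right hu.le (norm_nonneg s),
      mul_lt_mul_of_pos_right hs hwpos, norm_nonneg s, norm_nonneg u]
  have : ⟪r, s⟫ < ‖w‖ ^ 2 := lt_of_le_of_lt (le_abs_self _) (lt_of_le_of_lt habs hfin)
  linarith

/-- Positivity of a single conjugated projection factor. -/
lemma det_factor_pos {E : Type*} [NormedAddCommGroup E] [InnerProductSpace ℝ E]
    [FiniteDimensional ℝ E] (V Wi Wj : Submodule ℝ E)
    (ei : ↥Wi ≃ₗ[ℝ] ↥V) (ej : ↥Wj ≃ₗ[ℝ] ↥V)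
    (hei : ∀ x : ↥Wi, (ei x : E) = (Submodule.orthogonalProjectionOnto V (x : E) : E))
    (hej : ∀ x : ↥Wj, (ej x : E) = (Submodule.orthogonalProjectionOnto V (x : E) : E))
    (hbj : ∀ x ∈ Wj, x ≠ 0 → ‖x‖ < Real.sqrt 2 * ‖(Submodule.orthogonalProjectionOnto V x : E)‖)
    (hsi : ∀ w ∈ V, w ≠ 0 → Real.sqrt 2 * ‖w - (Submodule.orthogonalProjectionOnto Wi w : E)‖ < ‖w‖) :
    0 < LinearMap.det ((ei : ↥Wi →ₗ[ℝ] ↥V) ∘ₗ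
      ((Submodule.orthogonalProjectionOnto Wi).toLinearMap ∘ₗ Wj.subtype) ∘ₗ (ej.symm : ↥V →ₗ[ℝ] ↥Wj)) := by
  apply det_pos_of_inner_pos
  intro w hw0
  have hw0' : (w : E) ≠ 0 := fun h => hw0 (by exact_mod_cast Subtype.ext h)
  set u : E := ((ej.symm w : ↥Wj) : E) with hu_def
  have hu0 : u ≠ 0 := by
    intro h
    apply hw0
    have h1 : ej.symm w = 0 := Subtype.ext h
    have := congrArg ej h1
    rwa [ej.apply_symm_apply, map_zero] at this
  have hπu : (Submodule.orthogonalProjectionOnto V u : E) = (w : E) := by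
    have h' := hej (ej.symm w)
    rw [ej.apply_symm_apply] at h'
    exact h'.symm
  -- identify the inner product
  have key : ⟪((ei : ↥Wi →ₗ[ℝ] ↥V) ∘ₗ
      ((Submodule.orthogonalProjectionOnto Wi).toLinearMap ∘ₗ Wj.subtype) ∘ₗ (ej.symm : ↥V →ₗ[ℝ] ↥Wj)) w, w⟫
      = ⟪(Submodule.orthogonalProjectionOnto Wi u : E), (w : E)⟫ := by
    rw [Submodule.coe_inner]
    have happ : (((ei : ↥Wi →ₗ[ℝ] ↥V) ∘ₗ
        ((Submodule.orthogonalProjectionOnto Wi).toLinearMap ∘ₗ Wj.subtype) ∘ₗ (ej.symm : ↥V →ₗ[ℝ] ↥Wj)) w : E)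
        = (Submodule.orthogonalProjectionOnto V ((Submodule.orthogonalProjectionOnto Wi u : E)) : E) := by
      simp only [LinearMap.comp_apply, LinearEquiv.coe_coe, Submodule.subtype_apply]
      exact hei _
    rw [happ]
    have h0 : ⟪(Submodule.orthogonalProjectionOnto Wi u : E) -
        (Submodule.orthogonalProjectionOnto V (Submodule.orthogonalProjectionOnto Wi u : E) : E), (w : E)⟫ = 0 :=
      Submodule.starProjection_inner_eq_zero _ _ w.2
    rw [inner_sub_left, sub_eq_zero] at h0
    exact h0.symm
  rw [key]
  -- apply the positivity estimate
  apply inner_proj_pos Wi _ _ (hsi (w : E) w.2 hw0') hw0'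
  · have := hbj u (ej.symm w).2 hu0
    rwa [hπu] at this
  · have h0 : ⟪u - (Submodule.orthogonalProjectionOnto V u : E), (w : E)⟫ = 0 :=
      Submodule.starProjection_inner_eq_zero _ _ w.2
    rw [inner_sub_left, sub_eq_zero] at h0
    rw [h0, hπu, real_inner_self_eq_norm_sq]

/-- **Cyclic composed projections have positive determinant.**
If `V₁, V₂, V₃` are `d`-dimensional subspaces of `ℝ^N`, each making an angle
strictly less than `π/4` with a fixed `d`-dimensional subspace `V`, then the
endomorphism `(π_{V₁}|_{V₃}) ∘ (π_{V₃}|_{V₂}) ∘ (π_{V₂}|_{V₁}) : V₁ → V₁`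
has positive determinant. -/
theorem det_cyclic_projections_pos
    {N d : ℕ} (V V₁ V₂ V₃ : Submodule ℝ (EuclideanSpace ℝ (Fin N)))
    (hV : Module.finrank ℝ V = d)
    (h₁ : Module.finrank ℝ V₁ = d) (h₂ : Module.finrank ℝ V₂ = d)
    (h₃ : Module.finrank ℝ V₃ = d)
    (ha₁ : subspaceAngle V₁ V < Real.pi / 4)
    (ha₂ : subspaceAngle V₂ V < Real.pi / 4)
    (ha₃ : subspaceAngle V₃ V < Real.pi / 4) :
    0 < LinearMap.det
      ((((Submodule.orthogonalProjectionOnto V₁).comp V₃.subtypeL).comp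
          (((Submodule.orthogonalProjectionOnto V₃).comp V₂.subtypeL).comp
            ((Submodule.orthogonalProjectionOnto V₂).comp V₁.subtypeL))).toLinearMap) := by
  rcases Nat.eq_zero_or_pos d with hd | hd
  · -- trivial case: `V₁` is the zero space
    rw [hd] at h₁
    have hsub : Subsingleton ↥V₁ := finrank_zero_iff.mp h₁
    have hT : (((Submodule.orthogonalProjectionOnto V₁).comp V₃.subtypeL).comp
          (((Submodule.orthogonalProjectionOnto V₃).comp V₂.subtypeL).comp
            ((Submodule.orthogonalProjectionOnto V₂).comp V₁.subtypeL))).toLinearMap = LinearMap.id :=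
      Subsingleton.elim _ _
    rw [hT, LinearMap.det_id]
    norm_num
  · have hVnt : ∃ v ∈ V, v ≠ 0 := by
      apply Submodule.exists_mem_ne_zero_of_ne_bot
      intro h
      rw [h, finrank_bot] at hV
      omega
    have hb₁ : ∀ x ∈ V₁, x ≠ 0 → ‖x‖ < Real.sqrt 2 * ‖((Submodule.orthogonalProjectionOnto V x : ↥V) : EuclideanSpace ℝ (Fin N))‖ :=
      fun x hx hx0 => norm_lt_sqrt_two_mul_norm_proj V₁ V hVnt ha₁ hx hx0
    have hb₂ : ∀ x ∈ V₂, x ≠ 0 → ‖x‖ < Real.sqrt 2 * ‖((Submodule.orthogonalProjectionOnto V x : ↥V) : EuclideanSpace ℝ (Fin N))‖ :=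
      fun x hx hx0 => norm_lt_sqrt_two_mul_norm_proj V₂ V hVnt ha₂ hx hx0
    have hb₃ : ∀ x ∈ V₃, x ≠ 0 → ‖x‖ < Real.sqrt 2 * ‖((Submodule.orthogonalProjectionOnto V x : ↥V) : EuclideanSpace ℝ (Fin N))‖ :=
      fun x hx hx0 => norm_lt_sqrt_two_mul_norm_proj V₃ V hVnt ha₃ hx hx0
    -- construct the comparison isomorphisms
    have mk : ∀ (W : Submodule ℝ (EuclideanSpace ℝ (Fin N))), Module.finrank ℝ W = d →
        (∀ x ∈ W, x ≠ 0 → ‖x‖ < Real.sqrt 2 * ‖((Submodule.orthogonalProjectionOnto V x : ↥V) : EuclideanSpace ℝ (Fin N))‖) →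
        ∃ e : ↥W ≃ₗ[ℝ] ↥V, ∀ x : ↥W,
          (e x : EuclideanSpace ℝ (Fin N)) = ((Submodule.orthogonalProjectionOnto V (x : EuclideanSpace ℝ (Fin N)) : ↥V) : EuclideanSpace ℝ (Fin N)) := by
      intro W hW hbW
      set f : ↥W →ₗ[ℝ] ↥V := (Submodule.orthogonalProjectionOnto V).toLinearMap ∘ₗ W.subtype with hf
      have hinj : Function.Injective f := by
        apply (injective_iff_map_eq_zero f).mpr
        intro a ha
        by_contra ha0
        have ha0' : (a : EuclideanSpace ℝ (Fin N)) ≠ 0 := fun h => ha0 (Subtype.ext h)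
        have hlt := hbW a a.2 ha0'
        have hz : (Submodule.orthogonalProjectionOnto V (a : EuclideanSpace ℝ (Fin N)) :
            EuclideanSpace ℝ (Fin N)) = 0 := by
          have : f a = 0 := ha
          rw [hf] at this
          simp only [LinearMap.comp_apply, Submodule.subtype_apply] at this
          exact_mod_cast congrArg Subtype.val this
        rw [hz, norm_zero, mul_zero] at hlt
        exact absurd hlt (not_lt.mpr (norm_nonneg _))
      exact ⟨f.linearEquivOfInjective hinj (by rw [hW, hV]), fun x => rfl⟩
    obtain ⟨e₁, he₁⟩ := mk V₁ h₁ hb₁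
    obtain ⟨e₂, he₂⟩ := mk V₂ h₂ hb₂
    obtain ⟨e₃, he₃⟩ := mk V₃ h₃ hb₃
    -- surjectivity of the projections onto V
    have hsurj : ∀ (W : Submodule ℝ (EuclideanSpace ℝ (Fin N))) (e : ↥W ≃ₗ[ℝ] ↥V),
        (∀ x : ↥W, (e x : EuclideanSpace ℝ (Fin N)) = ((Submodule.orthogonalProjectionOnto V (x : EuclideanSpace ℝ (Fin N)) : ↥V) : EuclideanSpace ℝ (Fin N))) →
        ∀ w ∈ V, ∃ x ∈ W, (Submodule.orthogonalProjectionOnto V x : EuclideanSpace ℝ (Fin N)) = w := by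
      intro W e he w hw
      refine ⟨(e.symm ⟨w, hw⟩ : ↥W), (e.symm ⟨w, hw⟩).2, ?_⟩
      have h' := he (e.symm ⟨w, hw⟩)
      rw [e.apply_symm_apply] at h'
      exact h'.symm
    have hs₁ : ∀ w ∈ V, w ≠ 0 →
        Real.sqrt 2 * ‖w - ((Submodule.orthogonalProjectionOnto V₁ w : ↥V₁) : EuclideanSpace ℝ (Fin N))‖ < ‖w‖ :=
      fun w hw hw0 => dist_proj_lt V₁ V hb₁ (hsurj V₁ e₁ he₁) hw hw0
    have hs₂ : ∀ w ∈ V, w ≠ 0 →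
        Real.sqrt 2 * ‖w - ((Submodule.orthogonalProjectionOnto V₂ w : ↥V₂) : EuclideanSpace ℝ (Fin N))‖ < ‖w‖ :=
      fun w hw hw0 => dist_proj_lt V₂ V hb₂ (hsurj V₂ e₂ he₂) hw hw0
    have hs₃ : ∀ w ∈ V, w ≠ 0 →
        Real.sqrt 2 * ‖w - ((Submodule.orthogonalProjectionOnto V₃ w : ↥V₃) : EuclideanSpace ℝ (Fin N))‖ < ‖w‖ :=
      fun w hw hw0 => dist_proj_lt V₃ V hb₃ (hsurj V₃ e₃ he₃) hw hw0
    -- conjugate the composed map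
    set Tl : ↥V₁ →ₗ[ℝ] ↥V₁ := (((Submodule.orthogonalProjectionOnto V₁).comp V₃.subtypeL).comp
          (((Submodule.orthogonalProjectionOnto V₃).comp V₂.subtypeL).comp
            ((Submodule.orthogonalProjectionOnto V₂).comp V₁.subtypeL))).toLinearMap with hTl
    set D₁₃ : ↥V →ₗ[ℝ] ↥V := (e₁ : ↥V₁ →ₗ[ℝ] ↥V) ∘ₗ
      ((Submodule.orthogonalProjectionOnto V₁).toLinearMap ∘ₗ V₃.subtype) ∘ₗ (e₃.symm : ↥V →ₗ[ℝ] ↥V₃) with hD13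
    set D₃₂ : ↥V →ₗ[ℝ] ↥V := (e₃ : ↥V₃ →ₗ[ℝ] ↥V) ∘ₗ
      ((Submodule.orthogonalProjectionOnto V₃).toLinearMap ∘ₗ V₂.subtype) ∘ₗ (e₂.symm : ↥V →ₗ[ℝ] ↥V₂) with hD32
    set D₂₁ : ↥V →ₗ[ℝ] ↥V := (e₂ : ↥V₂ →ₗ[ℝ] ↥V) ∘ₗ
      ((Submodule.orthogonalProjectionOnto V₂).toLinearMap ∘ₗ V₁.subtype) ∘ₗ (e₁.symm : ↥V →ₗ[ℝ] ↥V₁) with hD21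
    have hcomp : (e₁ : ↥V₁ →ₗ[ℝ] ↥V) ∘ₗ Tl ∘ₗ (e₁.symm : ↥V →ₗ[ℝ] ↥V₁)
        = D₁₃ ∘ₗ D₃₂ ∘ₗ D₂₁ := by
      apply LinearMap.ext
      intro w
      simp [hTl, hD13, hD32, hD21, LinearMap.comp_apply, LinearEquiv.coe_coe,
        Submodule.subtype_apply, ContinuousLinearMap.coe_comp', Function.comp,
        LinearEquiv.symm_apply_apply, Submodule.subtypeL_apply, ContinuousLinearMap.coe_coe]
    have hdet : LinearMap.det Tl = LinearMap.det D₁₃ * (LinearMap.det D₃₂ * LinearMap.det D₂₁) := by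
      rw [← LinearMap.det_conj Tl e₁, hcomp, LinearMap.det_comp, LinearMap.det_comp]
    rw [hdet, hD13, hD32, hD21]
    have hp13 := det_factor_pos V V₁ V₃ e₁ e₃ he₁ he₃ hb₃ hs₁
    have hp32 := det_factor_pos V V₃ V₂ e₃ e₂ he₃ he₂ hb₂ hs₃
    have hp21 := det_factor_pos V V₂ V₁ e₂ e₁ he₂ he₁ hb₁ hs₂
    exact mul_pos hp13 (mul_pos hp32 hp21)
end

section
/- Let H be a d-dimensional affine subspace of ℝ^N and σ a non-degenerate simplex with dim σ ≤ d whose vertices all lie within distance t ≥ 0 of H. Then sin ∠(Aff σ, H) ≤ 2·t·dim(σ)/height(σ), where height(σ) = min_{v ∈ σ} d(v, Aff(σ \ {v})) is the minimal altitude of σ. -/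
/-!
Write `u ∈ vectorSpan σ` as `u = ∑ λ_v v` with `∑ λ_v = 0`. Since `w - u / λ_w` is an affine
combination of the other vertices, `|λ_w| · height(σ) ≤ ‖u‖`; and as the coefficients sum to
zero, `∑ |λ_v| ≤ 2 dim(σ) ‖u‖ / height(σ)`. Replacing every vertex `v` by a point of `H`
within distance `t` turns `u` into a vector of `H.direction` at distance at most
`t ∑ |λ_v| ≤ 2 t dim(σ) ‖u‖ / height(σ)` from `u`, and then the orthogonal projection of `u`
onto `H.direction` makes an angle with `u` whose sine is at most that ratio.
-/

open scoped Classical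
open Metric Module

/-- The height (minimal altitude) of a simplex with vertex set `σ`:
`min_{v ∈ σ} d(v, Aff(σ \ {v}))`. -/
noncomputable def simplexHeight {N : ℕ} (σ : Finset (EuclideanSpace ℝ (Fin N)))
    (h : σ.Nonempty) : ℝ :=
  σ.inf' h fun v =>
    Metric.infDist v (affineSpan ℝ ((σ.erase v : Finset (EuclideanSpace ℝ (Fin N))) : Set (EuclideanSpace ℝ (Fin N))))

open Finset InnerProductGeometry Real

lemma exists_sum_eq_zero_sum_smul_eq_of_mem_vectorSpan {k V : Type*} [Ring k] [AddCommGroup V]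
    [Module k V] {σ : Finset V} {u : V} (hu : u ∈ vectorSpan k (σ : Set V)) :
    ∃ lam : V → k, ∑ v ∈ σ, lam v = 0 ∧ ∑ v ∈ σ, lam v • v = u := by
  rw [vectorSpan_def] at hu
  induction hu using Submodule.span_induction with
  | mem x hx =>
    obtain ⟨a, ha, b, hb, rfl⟩ := hx
    refine ⟨Pi.single a 1 - Pi.single b 1, ?_, ?_⟩ <;>
      simp [sub_smul, sum_sub_distrib, Pi.single_apply, mem_coe.1 ha, mem_coe.1 hb]
  | zero => exact ⟨0, by simp, by simp⟩
  | add x y _ _ hx hy =>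
    obtain ⟨l, hl, rfl⟩ := hx
    obtain ⟨m, hm, rfl⟩ := hy
    exact ⟨l + m, by simp [sum_add_distrib, hl, hm], by simp [add_smul, sum_add_distrib]⟩
  | smul c x _ hx =>
    obtain ⟨l, hl, rfl⟩ := hx
    exact ⟨c • l, by simp [← mul_sum, hl], by simp [smul_sum, smul_smul]⟩

lemma AffineSubspace.sum_smul_mem_direction {k V ι : Type*} [Ring k] [AddCommGroup V]
    [Module k V] {H : AffineSubspace k V} {s : Finset ι} {w : ι → k} (hw : ∑ i ∈ s, w i = 0)
    {p : ι → V} (hp : ∀ i ∈ s, p i ∈ H) : ∑ i ∈ s, w i • p i ∈ H.direction := by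
  rcases s.eq_empty_or_nonempty with rfl | ⟨i₀, hi₀⟩
  · simp
  have hshift : ∑ i ∈ s, w i • p i = ∑ i ∈ s, w i • (p i -ᵥ p i₀) := by
    simp [smul_sub, sum_sub_distrib, ← sum_smul, hw]
  rw [hshift]
  exact Submodule.sum_mem _ fun i hi =>
    Submodule.smul_mem _ _ (H.vsub_mem_direction (hp i hi) (hp i₀ hi₀))

lemma sum_abs_le_of_sum_eq_zero {ι : Type*} {s : Finset ι} {f : ι → ℝ} (hf : ∑ i ∈ s, f i = 0)
    {M : ℝ} (hM : ∀ i ∈ s, |f i| ≤ M) : ∑ i ∈ s, |f i| ≤ 2 * ((s.card - 1 : ℕ) : ℝ) * M := by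
  rcases s.eq_empty_or_nonempty with rfl | ⟨i₀, hi₀⟩
  · simp
  have hrest : ∑ i ∈ s.erase i₀, |f i| ≤ ((s.card - 1 : ℕ) : ℝ) * M := by
    have h := sum_le_card_nsmul (s.erase i₀) (fun i => |f i|) M fun i hi =>
      hM i (mem_of_mem_erase hi)
    rwa [card_erase_of_mem hi₀, nsmul_eq_mul] at h
  -- the coefficient at `i₀` is minus the sum of the others
  have hfirst : |f i₀| ≤ ∑ i ∈ s.erase i₀, |f i| := by
    rw [← neg_eq_of_add_eq_zero_left ((add_sum_erase s f hi₀).trans hf), abs_neg]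
    exact abs_sum_le_sum_abs _ _
  rw [← add_sum_erase s _ hi₀]
  linarith

section Normed

variable {E : Type*} [NormedAddCommGroup E] [NormedSpace ℝ E] [DecidableEq E]

lemma abs_mul_infDist_affineSpan_erase_le {σ : Finset E} {lam : E → ℝ}
    (hsum : ∑ v ∈ σ, lam v = 0) {w : E} (hw : w ∈ σ) :
    |lam w| * Metric.infDist w (affineSpan ℝ (σ.erase w : Set E)) ≤ ‖∑ v ∈ σ, lam v • v‖ := by
  rcases eq_or_ne (lam w) 0 with h0 | h0
  · simp [h0]
  set u := ∑ v ∈ σ, lam v • v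
  have hweights : ∑ v ∈ σ.erase w, -(lam w)⁻¹ * lam v = 1 := by
    rw [← mul_sum, sum_erase_eq_sub hw, hsum, zero_sub, mul_neg, neg_mul, neg_neg,
      inv_mul_cancel₀ h0]
  have hmem : w - (lam w)⁻¹ • u ∈ affineSpan ℝ (σ.erase w : Set E) := by
    have h := affineCombination_mem_affineSpan_image hweights (s' := (σ.erase w : Set E))
      (fun _ hv hv' => absurd hv hv') id
    rw [Finset.affineCombination_eq_linear_combination _ _ _ hweights, Set.image_id] at h
    convert h using 1
    simp only [u, ← add_sum_erase σ _ hw, smul_add, smul_smul, inv_mul_cancel₀ h0, one_smul,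
      id, sub_add_cancel_left, smul_sum, neg_mul, neg_smul, sum_neg_distrib]
  calc |lam w| * Metric.infDist w (affineSpan ℝ (σ.erase w : Set E))
      ≤ |lam w| * dist w (w - (lam w)⁻¹ • u) := by
        gcongr
        exact Metric.infDist_le_dist_of_mem hmem
    _ = ‖u‖ := by
        rw [dist_eq_norm, sub_sub_cancel, norm_smul, norm_inv, Real.norm_eq_abs,
          mul_inv_cancel_left₀ (abs_ne_zero.2 h0)]

lemma exists_mem_direction_norm_sub_le {σ : Finset E} {H : AffineSubspace ℝ E} {h t : ℝ}
    (hh : 0 < h) (ht : 0 ≤ t)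
    (halt : ∀ v ∈ σ, h ≤ Metric.infDist v (affineSpan ℝ (σ.erase v : Set E)))
    (hnear : ∀ v ∈ σ, ∃ q ∈ H, dist v q ≤ t) {u : E} (hu : u ∈ vectorSpan ℝ (σ : Set E)) :
    ∃ u' ∈ H.direction, ‖u - u'‖ ≤ 2 * t * ((σ.card - 1 : ℕ) : ℝ) / h * ‖u‖ := by
  obtain ⟨lam, hsum, rfl⟩ := exists_sum_eq_zero_sum_smul_eq_of_mem_vectorSpan hu
  choose! q hqH hqt using hnear
  have hlam : ∀ v ∈ σ, |lam v| ≤ ‖∑ v ∈ σ, lam v • v‖ / h := fun v hv =>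
    (le_div_iff₀ hh).2 <| (mul_le_mul_of_nonneg_left (halt v hv) (abs_nonneg _)).trans
      (abs_mul_infDist_affineSpan_erase_le hsum hv)
  refine ⟨∑ v ∈ σ, lam v • q v, H.sum_smul_mem_direction hsum hqH, ?_⟩
  calc ‖∑ v ∈ σ, lam v • v - ∑ v ∈ σ, lam v • q v‖ = ‖∑ v ∈ σ, lam v • (v - q v)‖ := by
        simp only [smul_sub, sum_sub_distrib]
    _ ≤ ∑ v ∈ σ, |lam v| * t := norm_sum_le_of_le _ fun v hv => by
        rw [norm_smul, Real.norm_eq_abs, ← dist_eq_norm]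
        exact mul_le_mul_of_nonneg_left (hqt v hv) (abs_nonneg _)
    _ = (∑ v ∈ σ, |lam v|) * t := (sum_mul ..).symm
    _ ≤ 2 * ((σ.card - 1 : ℕ) : ℝ) * (‖∑ v ∈ σ, lam v • v‖ / h) * t := by
        gcongr
        exact sum_abs_le_of_sum_eq_zero hsum hlam
    _ = _ := by ring

end Normed

section InnerProduct

variable {E : Type*} [NormedAddCommGroup E] [InnerProductSpace ℝ E]

lemma sInf_angle_le_arcsin {K : Submodule ℝ E} [K.HasOrthogonalProjection] {u u' : E} {B : ℝ}
    (hu : u ≠ 0) (hu' : u' ∈ K) (hB : B < 1) (hdist : ‖u - u'‖ ≤ B * ‖u‖) :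
    sInf {φ | ∃ v ∈ K, v ≠ 0 ∧ φ = angle u v} ≤ arcsin B := by
  set p := K.starProjection u
  have hpK : p ∈ K := K.starProjection_apply_mem u
  have hproj : ‖u - p‖ ≤ B * ‖u‖ :=
    ((K.starProjection_minimal u).trans_le
      (ciInf_le ⟨0, by rintro _ ⟨x, rfl⟩; positivity⟩ ⟨u', hu'⟩)).trans hdist
  have hp : p ≠ 0 := by
    intro hp0
    rw [hp0, sub_zero] at hproj
    nlinarith [norm_pos_iff.2 hu]
  have hangle : angle u p = arcsin (‖u - p‖ / ‖u‖) := by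
    have h := angle_add_eq_arcsin_of_inner_eq_zero (x := p) (y := u - p)
      (by rw [real_inner_comm]; exact K.starProjection_inner_eq_zero u p hpK) (Or.inl hp)
    rwa [add_sub_cancel, angle_comm] at h
  calc sInf {φ | ∃ v ∈ K, v ≠ 0 ∧ φ = angle u v} ≤ angle u p :=
        csInf_le ⟨0, by rintro _ ⟨v, -, -, rfl⟩; exact angle_nonneg _ _⟩ ⟨p, hpK, hp, rfl⟩
    _ = arcsin (‖u - p‖ / ‖u‖) := hangle
    _ ≤ arcsin B := arcsin_le_arcsin ((div_le_iff₀ (norm_pos_iff.2 hu)).2 hproj)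

lemma sin_subspaceAngle_le {V₀ V₁ : Submodule ℝ E} [V₁.HasOrthogonalProjection] {B : ℝ}
    (hB : 0 ≤ B) (h : ∀ u ∈ V₀, ∃ u' ∈ V₁, ‖u - u'‖ ≤ B * ‖u‖) :
    sin (subspaceAngle V₀ V₁) ≤ B := by
  rcases le_or_gt 1 B with hB1 | hB1
  · exact (sin_le_one _).trans hB1
  have hle : subspaceAngle V₀ V₁ ≤ arcsin B := by
    refine Real.sSup_le ?_ (arcsin_nonneg.2 hB)
    rintro _ ⟨u, hu, hu0, rfl⟩
    obtain ⟨u', hu', hdist⟩ := h u hu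
    exact sInf_angle_le_arcsin hu0 hu' hB1 hdist
  have hnonneg : 0 ≤ subspaceAngle V₀ V₁ := by
    refine Real.sSup_nonneg ?_
    rintro _ ⟨u, -, -, rfl⟩
    exact Real.sInf_nonneg (by rintro _ ⟨v, -, -, rfl⟩; exact angle_nonneg _ _)
  calc sin (subspaceAngle V₀ V₁) ≤ sin (arcsin B) :=
        sin_le_sin_of_le_of_le_pi_div_two (by linarith [pi_pos]) (arcsin_le_pi_div_two B) hle
    _ = B := sin_arcsin (by linarith) hB1.le

end InnerProduct

lemma simplexHeight_pos {N : ℕ} {σ : Finset (EuclideanSpace ℝ (Fin N))} (hσne : σ.Nonempty)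
    (hindep : AffineIndependent ℝ
      (fun p : (σ : Set (EuclideanSpace ℝ (Fin N))) => (p : EuclideanSpace ℝ (Fin N))))
    (hcard : 2 ≤ σ.card) : 0 < simplexHeight σ hσne := by
  refine (lt_inf'_iff _).2 fun v hv => ?_
  have hne : ((affineSpan ℝ (σ.erase v : Set (EuclideanSpace ℝ (Fin N))) :
      Set (EuclideanSpace ℝ (Fin N)))).Nonempty := by
    obtain ⟨w, hw⟩ : (σ.erase v).Nonempty := card_pos.1 (by rw [card_erase_of_mem hv]; omega)
    exact ⟨w, subset_affineSpan ℝ _ hw⟩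
  have hv' := hindep.notMem_affineSpan_sdiff ⟨v, hv⟩ Set.univ
  rw [Set.image_sdiff Subtype.val_injective, Set.image_univ, Subtype.range_coe,
    Set.image_singleton, ← coe_erase] at hv'
  exact (AffineSubspace.closed_of_finiteDimensional _).notMem_iff_infDist_pos hne |>.1 hv'

theorem whitney_angle_bound_general
    {N : ℕ} (H : AffineSubspace ℝ (EuclideanSpace ℝ (Fin N)))
    (hHne : (H : Set (EuclideanSpace ℝ (Fin N))).Nonempty)
    (σ : Finset (EuclideanSpace ℝ (Fin N))) (hσne : σ.Nonempty)
    (hindep : AffineIndependent ℝ (fun p : (σ : Set (EuclideanSpace ℝ (Fin N))) => (p : EuclideanSpace ℝ (Fin N))))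
    (t : ℝ)
    (hclose : ∀ v ∈ σ, Metric.infDist v (H : Set (EuclideanSpace ℝ (Fin N))) ≤ t) :
    Real.sin (subspaceAngle (affineSpan ℝ (σ : Set (EuclideanSpace ℝ (Fin N)))).direction H.direction) ≤
      2 * t * ((σ.card - 1 : ℕ) : ℝ) / simplexHeight σ hσne := by
  have ht : 0 ≤ t := Metric.infDist_nonneg.trans (hclose _ hσne.choose_spec)
  have hheight : 0 ≤ simplexHeight σ hσne := le_inf' _ _ fun _ _ => Metric.infDist_nonneg
  refine sin_subspaceAngle_le (by positivity) fun u hu => ?_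
  rw [direction_affineSpan] at hu
  obtain hcard | hcard : σ.card = 1 ∨ 2 ≤ σ.card := by have := hσne.card_pos; omega
  · obtain ⟨v, rfl⟩ := card_eq_one.1 hcard
    rw [coe_singleton, vectorSpan_singleton, Submodule.mem_bot] at hu
    exact ⟨0, zero_mem _, by simp [hu]⟩
  have hnear : ∀ v ∈ σ, ∃ q ∈ H, dist v q ≤ t := fun v hv => by
    obtain ⟨q, hq, hdist⟩ := H.closed_of_finiteDimensional.exists_infDist_eq_dist hHne v
    exact ⟨q, hq, hdist ▸ hclose v hv⟩
  exact exists_mem_direction_norm_sub_le (simplexHeight_pos hσne hindep hcard) ht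
    (fun v hv => inf'_le _ hv) hnear hu

/-- **Whitney angle bound.**  Let `H` be a `d`-dimensional affine subspace of
`ℝ^N` and `σ` a non-degenerate simplex with `dim σ ≤ d` all of whose vertices lie
within distance `t` of `H`.  Then
`sin ∠(Aff σ, H) ≤ 2 t dim(σ) / height(σ)`. -/
theorem whitney_angle_bound
    {N d : ℕ} (H : AffineSubspace ℝ (EuclideanSpace ℝ (Fin N)))
    (hHne : (H : Set (EuclideanSpace ℝ (Fin N))).Nonempty)
    (hHdim : Module.finrank ℝ H.direction = d)
    (σ : Finset (EuclideanSpace ℝ (Fin N))) (hσne : σ.Nonempty)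
    (hindep : AffineIndependent ℝ (fun p : (σ : Set (EuclideanSpace ℝ (Fin N))) => (p : EuclideanSpace ℝ (Fin N))))
    (hdim : σ.card - 1 ≤ d)
    (t : ℝ) (ht : 0 ≤ t)
    (hclose : ∀ v ∈ σ, Metric.infDist v (H : Set (EuclideanSpace ℝ (Fin N))) ≤ t) :
    Real.sin (subspaceAngle (affineSpan ℝ (σ : Set (EuclideanSpace ℝ (Fin N)))).direction H.direction) ≤
      2 * t * ((σ.card - 1 : ℕ) : ℝ) / simplexHeight σ hσne :=
  whitney_angle_bound_general H hHne σ hσne hindep t hclose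
end

section
/- Let σ be a non-degenerate d-simplex in ℝ^N with circumsphere S(σ) of center Z(σ) and radius R(σ), and suppose 2·R(σ) ≤ ρ. Let c_σ be the center of the smallest N-ball enclosing σ. Then the closed ball B(Z(σ), R(σ)) is contained in B(c_σ, ρ). Consequently, if σ is delloc in a finite point set P at scale ρ (i.e., σ ∈ Del(π_{Aff σ}(P ∩ B(c_σ, ρ)))), then σ is a Gabriel simplex of P: no point of P lies in the open ball bounded by S(σ). -/
open scoped Classical
open Metric Set

/-- **Delloc simplices with small circumradius are Gabriel.**
Let `σ` be a non-degenerate `d`-simplex in `ℝ^N` with (smallest) circumsphere of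
center `Z ∈ Aff σ` and radius `R` satisfying `2R ≤ ρ`, and let `c` be the center
of the smallest enclosing ball of `σ` (of radius `r_enc`).  Then
`B(Z, R) ⊆ B(c, ρ)`; consequently, if `σ` is delloc in `P` at scale `ρ` (i.e.
`σ` belongs to the Delaunay complex of `π_{Aff σ}(P ∩ B(c, ρ))`), then `σ` is a
Gabriel simplex of `P`: no point of `P` lies strictly inside `S(σ)`. -/
theorem delloc_implies_gabriel
    {N : ℕ} (σ : Finset (EuclideanSpace ℝ (Fin N)))
    (hindep : AffineIndependent ℝ (fun p : (σ : Set (EuclideanSpace ℝ (Fin N))) => (p : EuclideanSpace ℝ (Fin N))))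
    (Z : EuclideanSpace ℝ (Fin N)) (R ρ : ℝ)
    (hZ : Z ∈ affineSpan ℝ (σ : Set (EuclideanSpace ℝ (Fin N))))
    (hcirc : ∀ a ∈ σ, dist a Z = R)
    (h2R : 2 * R ≤ ρ)
    (c : EuclideanSpace ℝ (Fin N)) (rEnc : ℝ)
    (hc : ∀ a ∈ σ, dist a c ≤ rEnc)
    (hcmin : ∀ (c' : EuclideanSpace ℝ (Fin N)) (r' : ℝ), (∀ a ∈ σ, dist a c' ≤ r') → rEnc ≤ r')
    (P : Finset (EuclideanSpace ℝ (Fin N))) :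
    Metric.closedBall Z R ⊆ Metric.closedBall c ρ ∧
    ((∃ (Z' : EuclideanSpace ℝ (Fin N)) (R' : ℝ),
        Z' ∈ affineSpan ℝ (σ : Set (EuclideanSpace ℝ (Fin N))) ∧
        (∀ a ∈ σ, dist a Z' = R') ∧
        (∀ q ∈ P, q ∈ Metric.closedBall c ρ →
          R' ≤ dist (projOnto Z (affineSpan ℝ (σ : Set (EuclideanSpace ℝ (Fin N)))).direction q) Z')) →
      ∀ p ∈ P, R ≤ dist p Z) := by
  -- σ is nonempty
  have hne : σ.Nonempty := by
    by_contra h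
    rw [Finset.not_nonempty_iff_eq_empty] at h
    subst h
    have h1 := hcmin c (rEnc - 1) (by simp)
    linarith
  obtain ⟨a₀, ha₀⟩ := hne
  have hR0 : 0 ≤ R := by rw [← hcirc a₀ ha₀]; exact dist_nonneg
  have hrEnc0 : 0 ≤ rEnc := le_trans dist_nonneg (hc a₀ ha₀)
  -- c lies in the convex hull of σ
  set K : Set (EuclideanSpace ℝ (Fin N)) := convexHull ℝ (σ : Set (EuclideanSpace ℝ (Fin N))) with hKdef
  have hKconv : Convex ℝ K := convex_convexHull ℝ _
  have hKne : K.Nonempty := ⟨a₀, subset_convexHull ℝ _ ha₀⟩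
  have hKcompact : IsCompact K := σ.finite_toSet.isCompact_convexHull ℝ
  have hKsubEnc : K ⊆ Metric.closedBall c rEnc := by
    apply convexHull_min _ (convex_closedBall c rEnc)
    intro a ha
    exact Metric.mem_closedBall.mpr (hc a ha)
  have hcK : c ∈ K := by
    by_contra hcK
    obtain ⟨v, hvK, hv⟩ :=
      exists_norm_eq_iInf_of_complete_convex hKne hKcompact.isComplete hKconv c
    have hproj := (norm_eq_iInf_iff_real_inner_le_zero hKconv hvK).mp hv
    have hδ : 0 < ‖c - v‖ := by
      rw [norm_pos_iff, sub_ne_zero]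
      rintro rfl; exact hcK hvK
    set δ := ‖c - v‖ with hδdef
    have hδEnc : δ ≤ rEnc := by
      have := hKsubEnc hvK
      rw [Metric.mem_closedBall, dist_eq_norm] at this
      rw [hδdef, ← norm_neg]; simpa [neg_sub] using this
    set r' := Real.sqrt (rEnc ^ 2 - δ ^ 2) with hr'def
    have ht0 : 0 ≤ rEnc ^ 2 - δ ^ 2 := by nlinarith
    have hub : ∀ a ∈ σ, dist a v ≤ r' := by
      intro a ha
      have hip := hproj a (subset_convexHull ℝ _ ha)
      have h1 : dist a c ^ 2 ≤ rEnc ^ 2 := by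
        have h := hc a ha
        nlinarith [dist_nonneg (x := a) (y := c)]
      have h2 : dist a c ^ 2 = dist a v ^ 2 + δ ^ 2 - 2 * inner ℝ (c - v) (a - v) := by
        rw [dist_eq_norm, dist_eq_norm]
        have hrw : a - c = (a - v) - (c - v) := by abel
        rw [hrw, norm_sub_sq_real, hδdef, real_inner_comm]
        ring
      have hsq : dist a v ^ 2 ≤ rEnc ^ 2 - δ ^ 2 := by nlinarith
      calc dist a v = Real.sqrt (dist a v ^ 2) := (Real.sqrt_sq dist_nonneg).symm
        _ ≤ r' := Real.sqrt_le_sqrt hsq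
    have hle := hcmin v r' hub
    have : rEnc ^ 2 ≤ r' ^ 2 := by
      apply pow_le_pow_left₀ hrEnc0 hle
    rw [Real.sq_sqrt ht0] at this
    nlinarith
  have hcZ : dist c Z ≤ R := by
    have hKsubZ : K ⊆ Metric.closedBall Z R := by
      apply convexHull_min _ (convex_closedBall Z R)
      intro a ha
      exact Metric.mem_closedBall.mpr (hcirc a ha).le
    exact Metric.mem_closedBall.mp (hKsubZ hcK)
  have hpart1 : Metric.closedBall Z R ⊆ Metric.closedBall c ρ := by
    intro x hx
    rw [Metric.mem_closedBall] at hx ⊢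
    calc dist x c ≤ dist x Z + dist Z c := dist_triangle x Z c
    _ ≤ R + R := add_le_add hx (by rw [dist_comm]; exact hcZ)
    _ ≤ ρ := by linarith
  refine ⟨hpart1, ?_⟩
  rintro ⟨Z', R', hZ', hcirc', hfar⟩ p hp
  -- Z' = Z and R' = R
  have hZ'eq : Z' = Z := by
    set v := Z' - Z with hvdef
    have hvD : v ∈ (affineSpan ℝ (σ : Set (EuclideanSpace ℝ (Fin N)))).direction := by
      have := AffineSubspace.vsub_mem_direction hZ' hZ
      simpa [hvdef] using this
    have key : ∀ a ∈ σ, 2 * inner ℝ (a - Z) v = R ^ 2 - R' ^ 2 + ‖v‖ ^ 2 := by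
      intro a ha
      have h1 : ‖(a - Z) - v‖ ^ 2 = ‖a - Z‖ ^ 2 - 2 * inner ℝ (a - Z) v + ‖v‖ ^ 2 :=
        norm_sub_sq_real _ _
      have h2 : (a - Z) - v = a - Z' := by rw [hvdef]; abel
      have h3 : ‖a - Z'‖ = R' := by rw [← dist_eq_norm]; exact hcirc' a ha
      have h4 : ‖a - Z‖ = R := by rw [← dist_eq_norm]; exact hcirc a ha
      rw [h2, h3, h4] at h1
      linarith
    have horth : (affineSpan ℝ (σ : Set (EuclideanSpace ℝ (Fin N)))).direction ≤ (ℝ ∙ v)ᗮ := by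
      rw [direction_affineSpan]
      apply Submodule.span_le.mpr
      rintro u hu
      rw [Set.mem_vsub] at hu
      obtain ⟨a, ha, b, hb, rfl⟩ := hu
      rw [SetLike.mem_coe, Submodule.mem_orthogonal_singleton_iff_inner_left]
      have hab : a -ᵥ b = (a - Z) - (b - Z) := by simp only [vsub_eq_sub]; abel
      rw [hab, inner_sub_left]
      have := key a ha
      have := key b hb
      linarith
    have hvv : (inner ℝ v v : ℝ) = 0 := by
      have := horth hvD
      rw [Submodule.mem_orthogonal_singleton_iff_inner_left] at this
      exact this
    have : v = 0 := by
      rwa [inner_self_eq_zero] at hvv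
    rw [hvdef, sub_eq_zero] at this
    exact this
  have hR'eq : R' = R := by
    rw [← hcirc a₀ ha₀, ← hcirc' a₀ ha₀, hZ'eq]
  rw [hZ'eq, hR'eq] at hfar
  by_cases hball : p ∈ Metric.closedBall c ρ
  · have hfp := hfar p hp hball
    set D := (affineSpan ℝ (σ : Set (EuclideanSpace ℝ (Fin N)))).direction
    have hdist : dist (projOnto Z D p) Z = ‖(D.orthogonalProjectionOnto (p - Z) : EuclideanSpace ℝ (Fin N))‖ := by
      rw [projOnto, dist_eq_norm, add_sub_cancel_left]
    have hnorm : ‖(D.orthogonalProjectionOnto (p - Z) : EuclideanSpace ℝ (Fin N))‖ ≤ ‖p - Z‖ := by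
      calc ‖(D.orthogonalProjectionOnto (p - Z) : EuclideanSpace ℝ (Fin N))‖
          = ‖D.orthogonalProjectionOnto (p - Z)‖ := rfl
        _ ≤ ‖D.orthogonalProjectionOnto‖ * ‖p - Z‖ := (D.orthogonalProjectionOnto).le_opNorm _
        _ ≤ 1 * ‖p - Z‖ := by
            apply mul_le_mul_of_nonneg_right (Submodule.orthogonalProjectionOnto_norm_le (K := D)) (norm_nonneg _)
        _ = ‖p - Z‖ := one_mul _
    calc R ≤ dist (projOnto Z D p) Z := hfp
      _ ≤ ‖p - Z‖ := by rw [hdist]; exact hnorm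
      _ = dist p Z := (dist_eq_norm p Z).symm
  · rw [Metric.mem_closedBall, not_le] at hball
    have htri : dist p c ≤ dist p Z + dist Z c := dist_triangle p Z c
    have : dist Z c ≤ R := by rw [dist_comm]; exact hcZ
    linarith
end
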